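/- arXiv:2504.11915 — 6 statements merged into one kernel-verified Lean document; each statement's English description precedes it below -/
import Mathlib

section
/- Let P₀ and P₁ be two distinct points of Γ such that the line P₀P₁ is tangent to ℰ at a point Q, and let R be the intersection point of the tangent line to Γ at P₀ with the tangent line to Γ at P₁. Then the lines P₀P₁ and RQ are orthogonal, i.e. (P₁ − P₀) ⋅ (R − Q) = 0. -/
noncomputable section

/-- Planar cross product (wedge) of two vectors in `ℝ × ℝ`. -/
def wedge (u v : ℝ × ℝ) : ℝ := u.1 * v.2 - u.2 * v.1

/-- Euclidean dot product in `ℝ × ℝ`. -/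
def dotp (u v : ℝ × ℝ) : ℝ := u.1 * v.1 + u.2 * v.2

/-- The line through two points `A B` in `ℝ × ℝ` (as a set). -/
def lineThrough (A B : ℝ × ℝ) : Set (ℝ × ℝ) := {p | ∃ t : ℝ, p = A + t • (B - A)}

/-- If the quadratic `α t² + 2 β t` vanishes only at `t = 0` and `α > 0`, then `β = 0`. -/
lemma quad_only_root (α β : ℝ) (hα : 0 < α)
    (h : ∀ t : ℝ, α * t ^ 2 + 2 * β * t = 0 → t = 0) : β = 0 := by
  have h0 := h (-2 * β / α) (by field_simp; ring)
  have hαne : α ≠ 0 := ne_of_gt hα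
  field_simp at h0
  linarith

/-- Lemma 2.4 in Stachel: for confocal nested ellipses `E ⊂ Γ`, if the chord `P₀P₁` of `Γ`
is tangent to `E` at `Q` and the tangent lines to `Γ` at `P₀` and `P₁` meet at `R`,
then `P₀P₁ ⟂ RQ`. -/
theorem orthogonality_confocal_ellipses
    (a b lam : ℝ) (hb : 0 < b) (hab : b < a) (hlam : 0 < lam)
    (E G : Set (ℝ × ℝ))
    (hE : E = {p : ℝ × ℝ | p.1 ^ 2 / a ^ 2 + p.2 ^ 2 / b ^ 2 = 1})
    (hG : G = {p : ℝ × ℝ | p.1 ^ 2 / (a ^ 2 + lam) + p.2 ^ 2 / (b ^ 2 + lam) = 1})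
    (P₀ P₁ Q R : ℝ × ℝ)
    (hP₀ : P₀ ∈ G) (hP₁ : P₁ ∈ G) (hne : P₀ ≠ P₁)
    (hQE : Q ∈ E) (hQline : Q ∈ lineThrough P₀ P₁)
    (htang : lineThrough P₀ P₁ ∩ E = {Q})
    (d₀ d₁ : ℝ × ℝ) (hd₀ : d₀ ≠ 0) (hd₁ : d₁ ≠ 0)
    (hT₀ : {p : ℝ × ℝ | ∃ t : ℝ, p = P₀ + t • d₀} ∩ G = {P₀})
    (hT₁ : {p : ℝ × ℝ | ∃ t : ℝ, p = P₁ + t • d₁} ∩ G = {P₁})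
    (hR₀ : ∃ t : ℝ, R = P₀ + t • d₀) (hR₁ : ∃ t : ℝ, R = P₁ + t • d₁) :
    dotp (P₁ - P₀) (R - Q) = 0 := by
  -- notation
  set A := a ^ 2 with hA
  set B := b ^ 2 with hB
  have ha : 0 < a := hb.trans hab
  have hApos : 0 < A := by rw [hA]; exact pow_pos ha 2
  have hBpos : 0 < B := by rw [hB]; exact pow_pos hb 2
  have hALpos : 0 < A + lam := by linarith
  have hBLpos : 0 < B + lam := by linarith
  have hAne : A ≠ 0 := ne_of_gt hApos
  have hBne : B ≠ 0 := ne_of_gt hBpos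
  have hALne : A + lam ≠ 0 := ne_of_gt hALpos
  have hBLne : B + lam ≠ 0 := ne_of_gt hBLpos
  -- cleared-denominator membership equations
  have hGmem : ∀ p : ℝ × ℝ, p ∈ G ↔
      (B + lam) * p.1 ^ 2 + (A + lam) * p.2 ^ 2 = (A + lam) * (B + lam) := by
    intro p
    rw [hG]
    simp only [Set.mem_setOf_eq]
    rw [div_add_div _ _ hALne hBLne, div_eq_one_iff_eq (by positivity)]
    constructor <;> intro h <;> linarith
  have hEmem : ∀ p : ℝ × ℝ, p ∈ E ↔
      B * p.1 ^ 2 + A * p.2 ^ 2 = A * B := by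
    intro p
    rw [hE]
    simp only [Set.mem_setOf_eq]
    rw [div_add_div _ _ hAne hBne, div_eq_one_iff_eq (by positivity)]
    constructor <;> intro h <;> linarith
  have g0 : (B + lam) * P₀.1 ^ 2 + (A + lam) * P₀.2 ^ 2 = (A + lam) * (B + lam) :=
    (hGmem P₀).mp hP₀
  have g1 : (B + lam) * P₁.1 ^ 2 + (A + lam) * P₁.2 ^ 2 = (A + lam) * (B + lam) :=
    (hGmem P₁).mp hP₁
  have e1 : B * Q.1 ^ 2 + A * Q.2 ^ 2 = A * B := (hEmem Q).mp hQE
  -- chord direction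
  set u : ℝ × ℝ := P₁ - P₀ with hu
  have hune : u ≠ 0 := sub_ne_zero.mpr (Ne.symm hne)
  have hu2 : u.1 ≠ 0 ∨ u.2 ≠ 0 := by
    by_contra h
    push_neg at h
    exact hune (Prod.ext h.1 h.2)
  obtain ⟨s, hs⟩ := hQline
  have hsx : Q.1 = P₀.1 + s * u.1 := by rw [hs]; rfl
  have hsy : Q.2 = P₀.2 + s * u.2 := by rw [hs]; rfl
  -- tangency of the chord to E at Q : B u₁ Q₁ + A u₂ Q₂ = 0
  have hαE : 0 < B * u.1 ^ 2 + A * u.2 ^ 2 := by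
    rcases hu2 with h | h
    · have h1 : 0 < u.1 ^ 2 := (sq_nonneg u.1).lt_of_ne ((pow_ne_zero 2 h).symm)
      have h2 : 0 < B * u.1 ^ 2 := mul_pos hBpos h1
      have h3 : 0 ≤ A * u.2 ^ 2 := mul_nonneg hApos.le (sq_nonneg _)
      linarith
    · have h1 : 0 < u.2 ^ 2 := (sq_nonneg u.2).lt_of_ne ((pow_ne_zero 2 h).symm)
      have h2 : 0 < A * u.2 ^ 2 := mul_pos hApos h1
      have h3 : 0 ≤ B * u.1 ^ 2 := mul_nonneg hBpos.le (sq_nonneg _)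
      linarith
  have F4 : B * u.1 * Q.1 + A * u.2 * Q.2 = 0 := by
    apply quad_only_root _ _ hαE
    intro t ht
    have hmem : Q + t • u ∈ lineThrough P₀ P₁ ∩ E := by
      constructor
      · exact ⟨s + t, by rw [hs, hu]; module⟩
      · rw [hEmem]
        have h1 : (Q + t • u).1 = Q.1 + t * u.1 := rfl
        have h2 : (Q + t • u).2 = Q.2 + t * u.2 := rfl
        rw [h1, h2]
        linear_combination e1 + ht
    rw [htang] at hmem
    have : t • u = 0 := by
      have := hmem
      simp only [Set.mem_singleton_iff] at this
      have h' : Q + t • u - Q = 0 := by rw [this]; ring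
      simpa using h'
    rcases smul_eq_zero.mp this with h | h
    · exact h
    · exact absurd h hune
  -- P₀ lies on the tangent line to E at Q
  have F5 : B * P₀.1 * Q.1 + A * P₀.2 * Q.2 = A * B := by
    linear_combination e1 - s * F4 - B * Q.1 * hsx - A * Q.2 * hsy
  -- tangency of d-lines to G : (B+lam) d₁ P₁ + (A+lam) d₂ P₂ = 0
  have tangentG : ∀ (P d : ℝ × ℝ), d ≠ 0 →
      (B + lam) * P.1 ^ 2 + (A + lam) * P.2 ^ 2 = (A + lam) * (B + lam) →
      ({p : ℝ × ℝ | ∃ t : ℝ, p = P + t • d} ∩ G = {P}) →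
      (B + lam) * d.1 * P.1 + (A + lam) * d.2 * P.2 = 0 := by
    intro P d hd hPg hT
    have hd2 : d.1 ≠ 0 ∨ d.2 ≠ 0 := by
      by_contra h
      push_neg at h
      exact hd (Prod.ext h.1 h.2)
    have hαG : 0 < (B + lam) * d.1 ^ 2 + (A + lam) * d.2 ^ 2 := by
      rcases hd2 with h | h
      · have h1 : 0 < d.1 ^ 2 := (sq_nonneg d.1).lt_of_ne ((pow_ne_zero 2 h).symm)
        have h2 : 0 < (B + lam) * d.1 ^ 2 := mul_pos hBLpos h1
        have h3 : 0 ≤ (A + lam) * d.2 ^ 2 := mul_nonneg hALpos.le (sq_nonneg _)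
        linarith
      · have h1 : 0 < d.2 ^ 2 := (sq_nonneg d.2).lt_of_ne ((pow_ne_zero 2 h).symm)
        have h2 : 0 < (A + lam) * d.2 ^ 2 := mul_pos hALpos h1
        have h3 : 0 ≤ (B + lam) * d.1 ^ 2 := mul_nonneg hBLpos.le (sq_nonneg _)
        linarith
    apply quad_only_root _ _ hαG
    intro t ht
    have hmem : P + t • d ∈ ({p : ℝ × ℝ | ∃ t : ℝ, p = P + t • d} ∩ G) := by
      constructor
      · exact ⟨t, rfl⟩
      · rw [hGmem]
        have h1 : (P + t • d).1 = P.1 + t * d.1 := rfl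
        have h2 : (P + t • d).2 = P.2 + t * d.2 := rfl
        rw [h1, h2]
        linear_combination hPg + ht
    rw [hT] at hmem
    simp only [Set.mem_singleton_iff] at hmem
    have : t • d = 0 := by
      have h' : P + t • d - P = 0 := by rw [hmem]; ring
      simpa using h'
    rcases smul_eq_zero.mp this with h | h
    · exact h
    · exact absurd h hd
  have ht0 : (B + lam) * d₀.1 * P₀.1 + (A + lam) * d₀.2 * P₀.2 = 0 :=
    tangentG P₀ d₀ hd₀ g0 hT₀
  have ht1 : (B + lam) * d₁.1 * P₁.1 + (A + lam) * d₁.2 * P₁.2 = 0 :=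
    tangentG P₁ d₁ hd₁ g1 hT₁
  -- R lies on the polar lines of P₀ and P₁ w.r.t. G
  obtain ⟨t0, hRt0⟩ := hR₀
  obtain ⟨t1, hRt1⟩ := hR₁
  have hR0x : R.1 = P₀.1 + t0 * d₀.1 := by rw [hRt0]; rfl
  have hR0y : R.2 = P₀.2 + t0 * d₀.2 := by rw [hRt0]; rfl
  have hR1x : R.1 = P₁.1 + t1 * d₁.1 := by rw [hRt1]; rfl
  have hR1y : R.2 = P₁.2 + t1 * d₁.2 := by rw [hRt1]; rfl
  have F6 : (B + lam) * R.1 * P₀.1 + (A + lam) * R.2 * P₀.2 = (A + lam) * (B + lam) := by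
    rw [hR0x, hR0y]; linear_combination g0 + t0 * ht0
  have F7 : (B + lam) * R.1 * P₁.1 + (A + lam) * R.2 * P₁.2 = (A + lam) * (B + lam) := by
    rw [hR1x, hR1y]; linear_combination g1 + t1 * ht1
  -- key determinant
  set D : ℝ := P₀.1 * P₁.2 - P₀.2 * P₁.1 with hD
  have keyR : (A + lam) * (B + lam) *
      (D * (u.1 * R.1 + u.2 * R.2) - (A - B) * u.1 * u.2) = 0 := by
    have hu1 : u.1 = P₁.1 - P₀.1 := rfl
    have hu2' : u.2 = P₁.2 - P₀.2 := rfl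
    rw [hu1, hu2', hD]
    linear_combination ((A + lam) * (P₁.1 - P₀.1) * P₁.2 - (B + lam) * (P₁.2 - P₀.2) * P₁.1) * F6
      + (-(A + lam) * (P₁.1 - P₀.1) * P₀.2 + (B + lam) * (P₁.2 - P₀.2) * P₀.1) * F7
  have keyQ : A * B *
      (D * (u.1 * Q.1 + u.2 * Q.2) - (A - B) * u.1 * u.2) = 0 := by
    have hu1 : u.1 = P₁.1 - P₀.1 := rfl
    have hu2' : u.2 = P₁.2 - P₀.2 := rfl
    have F4' : B * (P₁.1 - P₀.1) * Q.1 + A * (P₁.2 - P₀.2) * Q.2 = 0 := by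
      rw [← hu1, ← hu2']; exact F4
    rw [hu1, hu2', hD]
    linear_combination (B * (P₁.2 - P₀.2) * P₀.1 - A * (P₁.1 - P₀.1) * P₀.2) * F4'
      + (A * (P₁.1 - P₀.1) * (P₁.2 - P₀.2) - B * (P₁.2 - P₀.2) * (P₁.1 - P₀.1)) * F5
  have hKne : (A + lam) * (B + lam) ≠ 0 := ne_of_gt (mul_pos hALpos hBLpos)
  have hABne : A * B ≠ 0 := ne_of_gt (mul_pos hApos hBpos)
  have keyR' : D * (u.1 * R.1 + u.2 * R.2) = (A - B) * u.1 * u.2 := by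
    have := mul_eq_zero.mp keyR
    rcases this with h | h
    · exact absurd h hKne
    · linarith
  have keyQ' : D * (u.1 * Q.1 + u.2 * Q.2) = (A - B) * u.1 * u.2 := by
    have := mul_eq_zero.mp keyQ
    rcases this with h | h
    · exact absurd h hABne
    · linarith
  -- D ≠ 0 : nondegeneracy
  have hDne : D ≠ 0 := by
    intro hD0
    -- Lagrange identity: K² = c² where c = (B+lam)P₀₁P₁₁ + (A+lam)P₀₂P₁₂
    set c : ℝ := (B + lam) * P₀.1 * P₁.1 + (A + lam) * P₀.2 * P₁.2 with hc
    have hK : ((A + lam) * (B + lam)) ^ 2 - c ^ 2 = (A + lam) * (B + lam) * D ^ 2 := by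
      rw [hc, hD]
      linear_combination (-((B + lam) * P₁.1 ^ 2 + (A + lam) * P₁.2 ^ 2)) * g0
        - ((A + lam) * (B + lam)) * g1
    have hc2 : c ^ 2 = ((A + lam) * (B + lam)) ^ 2 := by
      rw [hD0] at hK; linear_combination -hK
    have : (c - (A + lam) * (B + lam)) * (c + (A + lam) * (B + lam)) = 0 := by
      linear_combination hc2
    rcases mul_eq_zero.mp this with h | h
    · -- c = K  ⇒  P₀ = P₁
      have hzero : (B + lam) * (P₁.1 - P₀.1) ^ 2 + (A + lam) * (P₁.2 - P₀.2) ^ 2 = 0 := by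
        linear_combination g0 + g1 - 2 * h
      have k1 : 0 ≤ (B + lam) * (P₁.1 - P₀.1) ^ 2 := mul_nonneg hBLpos.le (sq_nonneg _)
      have k2 : 0 ≤ (A + lam) * (P₁.2 - P₀.2) ^ 2 := mul_nonneg hALpos.le (sq_nonneg _)
      have e1' : (B + lam) * (P₁.1 - P₀.1) ^ 2 = 0 := by linarith
      have e2' : (A + lam) * (P₁.2 - P₀.2) ^ 2 = 0 := by linarith
      have h1 : P₁.1 - P₀.1 = 0 := by
        have := (mul_eq_zero.mp e1').resolve_left hBLne
        exact pow_eq_zero_iff (two_ne_zero) |>.mp this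
      have h2 : P₁.2 - P₀.2 = 0 := by
        have := (mul_eq_zero.mp e2').resolve_left hALne
        exact pow_eq_zero_iff (two_ne_zero) |>.mp this
      exact hne (Prod.ext (by linarith) (by linarith))
    · -- c = -K  ⇒  P₁ = -P₀ ⇒ contradiction with F6, F7
      have hzero : (B + lam) * (P₁.1 + P₀.1) ^ 2 + (A + lam) * (P₁.2 + P₀.2) ^ 2 = 0 := by
        linear_combination g0 + g1 + 2 * h
      have k1 : 0 ≤ (B + lam) * (P₁.1 + P₀.1) ^ 2 := mul_nonneg hBLpos.le (sq_nonneg _)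
      have k2 : 0 ≤ (A + lam) * (P₁.2 + P₀.2) ^ 2 := mul_nonneg hALpos.le (sq_nonneg _)
      have e1' : (B + lam) * (P₁.1 + P₀.1) ^ 2 = 0 := by linarith
      have e2' : (A + lam) * (P₁.2 + P₀.2) ^ 2 = 0 := by linarith
      have h1 : P₁.1 + P₀.1 = 0 := by
        have := (mul_eq_zero.mp e1').resolve_left hBLne
        exact pow_eq_zero_iff (two_ne_zero) |>.mp this
      have h2 : P₁.2 + P₀.2 = 0 := by
        have := (mul_eq_zero.mp e2').resolve_left hALne
        exact pow_eq_zero_iff (two_ne_zero) |>.mp this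
      have h2K : (2 : ℝ) * ((A + lam) * (B + lam)) = 0 := by
        linear_combination -F6 - F7 + (B + lam) * R.1 * h1 + (A + lam) * R.2 * h2
      have := mul_pos hALpos hBLpos
      linarith
  -- conclusion
  have final : D * (u.1 * (R.1 - Q.1) + u.2 * (R.2 - Q.2)) = 0 := by
    linear_combination keyR' - keyQ' 
  have : u.1 * (R.1 - Q.1) + u.2 * (R.2 - Q.2) = 0 := by
    rcases mul_eq_zero.mp final with h | h
    · exact absurd h hDne
    · exact h
  simpa [dotp, hu] using this
end
end

section
/- Let P₀ and P₁ be two distinct points of Γ such that the line P₀P₁ is tangent to ℰ at a point Q. Let R be the intersection point of the tangent lines to Γ at P₀ and at P₁, and let P be the intersection of the tangent line to ℰ through P₀ other than P₀P₁ with the tangent line to ℰ through P₁ other than P₀P₁; assume P, P₀, P₁ are not collinear. Then R is equidistant from the three side-lines of the triangle P₀PP₁ (i.e. R is its incenter) and the orthogonal projection of R onto the line P₀P₁ equals Q; consequently, the incircle of the triangle P₀PP₁ is tangent to the line P₀P₁ at the point Q. -/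
noncomputable section

set_option maxHeartbeats 1600000

/-- Euclidean norm in `ℝ × ℝ`. -/
def enorm2 (u : ℝ × ℝ) : ℝ := Real.sqrt (u.1 ^ 2 + u.2 ^ 2)

/-- Euclidean distance from a point `R` to the line through `A` and `B`. -/
def distLine (R A B : ℝ × ℝ) : ℝ := |wedge (B - A) (R - A)| / enorm2 (B - A)

/-- Kernel of a nonzero linear functional on `ℝ²` is spanned by the rotated vector. -/
lemma ker2 {al be w1 w2 : ℝ} (hz : ¬(al = 0 ∧ be = 0)) (h : al * w1 + be * w2 = 0) :
    ∃ t : ℝ, w1 = t * (-be) ∧ w2 = t * al := by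
  by_cases hal : al = 0
  · have hbe : be ≠ 0 := fun hb => hz ⟨hal, hb⟩
    subst hal
    have hw2 : w2 = 0 := by
      have h' : be * w2 = 0 := by linarith
      exact (mul_eq_zero.mp h').resolve_left hbe
    exact ⟨-w1 / be, by field_simp, by rw [hw2]; ring⟩
  · refine ⟨w2 / al, ?_, by field_simp⟩
    field_simp
    linear_combination h

/-- If a line `{Q + t d}` meets the ellipse only at `Q`, and `Q` lies on the ellipse,
then the direction `d` is tangent: `Q.1 d.1 / al + Q.2 d.2 / be = 0` (cleared form). -/
lemma tangent_dir {al be : ℝ} (hal : 0 < al) (hbe : 0 < be) (Q d : ℝ × ℝ) (hd : d ≠ 0)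
    (L : Set (ℝ × ℝ)) (hsub : ∀ t : ℝ, Q + t • d ∈ L)
    (hQ : Q.1 ^ 2 / al + Q.2 ^ 2 / be = 1)
    (hinter : L ∩ {p : ℝ × ℝ | p.1 ^ 2 / al + p.2 ^ 2 / be = 1} = {Q}) :
    Q.1 * d.1 * be + Q.2 * d.2 * al = 0 := by
  have hal' : al ≠ 0 := hal.ne'
  have hbe' : be ≠ 0 := hbe.ne'
  have hQc : Q.1 ^ 2 * be + Q.2 ^ 2 * al = al * be := by
    field_simp at hQ
    linear_combination hQ
  have hd' : d.1 ≠ 0 ∨ d.2 ≠ 0 := by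
    by_contra hcon
    push_neg at hcon
    exact hd (Prod.ext_iff.mpr ⟨hcon.1, hcon.2⟩)
  have hmm0 : 0 < d.1 ^ 2 * be + d.2 ^ 2 * al := by
    rcases hd' with h | h
    · have h1 : 0 < d.1 ^ 2 * be := by positivity
      nlinarith [mul_nonneg (sq_nonneg d.2) hal.le]
    · have h1 : 0 < d.2 ^ 2 * al := by positivity
      nlinarith [mul_nonneg (sq_nonneg d.1) hbe.le]
  set t : ℝ := -(2 * (Q.1 * d.1 * be + Q.2 * d.2 * al)) / (d.1 ^ 2 * be + d.2 ^ 2 * al)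
    with htd
  have htm : t * (d.1 ^ 2 * be + d.2 ^ 2 * al)
      = -(2 * (Q.1 * d.1 * be + Q.2 * d.2 * al)) := by
    rw [htd]; field_simp
  have hmem2 : (Q + t • d) ∈ {p : ℝ × ℝ | p.1 ^ 2 / al + p.2 ^ 2 / be = 1} := by
    have h1 : (Q + t • d).1 = Q.1 + t * d.1 := rfl
    have h2 : (Q + t • d).2 = Q.2 + t * d.2 := rfl
    show (Q + t • d).1 ^ 2 / al + (Q + t • d).2 ^ 2 / be = 1
    rw [h1, h2, div_add_div _ _ hal' hbe', div_eq_one_iff_eq (by positivity)]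
    linear_combination hQc + t * htm
  have hQt : Q + t • d ∈ ({Q} : Set (ℝ × ℝ)) := by
    rw [← hinter]; exact ⟨hsub t, hmem2⟩
  have hQt' : Q + t • d = Q := hQt
  have ht0 : t • d = 0 := by
    have := hQt'
    exact add_eq_left.mp this
  have ht00 : t = 0 := by
    rcases smul_eq_zero.mp ht0 with h | h
    · exact h
    · exact absurd h hd
  rw [ht00, zero_mul] at htm
  linarith

/-- Equality of absolute-value/sqrt ratios from a squared identity. -/
lemma abs_div_sqrt_eq {x y s u : ℝ} (hs : 0 < s) (hu : 0 < u) (h : x ^ 2 * u = y ^ 2 * s) :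
    |x| / Real.sqrt s = |y| / Real.sqrt u := by
  rw [← Real.sqrt_sq_eq_abs x, ← Real.sqrt_sq_eq_abs y,
    ← Real.sqrt_div (sq_nonneg x), ← Real.sqrt_div (sq_nonneg y)]
  congr 1
  rw [div_eq_div_iff hs.ne' hu.ne']
  linarith

/-- Distance from a point to a line expressed via a normal vector of the line. -/
lemma distLine_eq (Rp Ap Bp : ℝ × ℝ) (n1 n2 : ℝ) (hn : 0 < n1 ^ 2 + n2 ^ 2)
    (hAB : Bp ≠ Ap)
    (hperp : n1 * (Bp.1 - Ap.1) + n2 * (Bp.2 - Ap.2) = 0) :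
    distLine Rp Ap Bp
      = |n1 * (Rp.1 - Ap.1) + n2 * (Rp.2 - Ap.2)| / Real.sqrt (n1 ^ 2 + n2 ^ 2) := by
  have hv : ¬(Bp.1 - Ap.1 = 0 ∧ Bp.2 - Ap.2 = 0) := by
    rintro ⟨h1, h2⟩
    exact hAB (Prod.ext_iff.mpr ⟨by linarith, by linarith⟩)
  have hvv : 0 < (Bp.1 - Ap.1) ^ 2 + (Bp.2 - Ap.2) ^ 2 := by
    rcases not_and_or.mp hv with h | h
    · have h1 : 0 < (Bp.1 - Ap.1) ^ 2 := by positivity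
      nlinarith [sq_nonneg (Bp.2 - Ap.2)]
    · have h1 : 0 < (Bp.2 - Ap.2) ^ 2 := by positivity
      nlinarith [sq_nonneg (Bp.1 - Ap.1)]
  have hx : ((Bp.1 - Ap.1) * (Rp.2 - Ap.2) - (Bp.2 - Ap.2) * (Rp.1 - Ap.1)) ^ 2
        * (n1 ^ 2 + n2 ^ 2)
      = (n1 * (Rp.1 - Ap.1) + n2 * (Rp.2 - Ap.2)) ^ 2
        * ((Bp.1 - Ap.1) ^ 2 + (Bp.2 - Ap.2) ^ 2) := by
    have h0 : ((Bp.1 - Ap.1) ^ 2 + (Bp.2 - Ap.2) ^ 2)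
        * ((n1 * (Rp.1 - Ap.1) + n2 * (Rp.2 - Ap.2)) ^ 2
            * ((Bp.1 - Ap.1) ^ 2 + (Bp.2 - Ap.2) ^ 2)
          - ((Bp.1 - Ap.1) * (Rp.2 - Ap.2) - (Bp.2 - Ap.2) * (Rp.1 - Ap.1)) ^ 2
            * (n1 ^ 2 + n2 ^ 2)) = 0 := by
      linear_combination
        (-(n1 * (Bp.1 - Ap.1) + n2 * (Bp.2 - Ap.2))
            * ((Bp.1 - Ap.1) * (Rp.2 - Ap.2) - (Bp.2 - Ap.2) * (Rp.1 - Ap.1)) ^ 2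
          + 2 * ((Bp.1 - Ap.1) * n2 - (Bp.2 - Ap.2) * n1)
            * ((Bp.1 - Ap.1) * (Rp.2 - Ap.2) - (Bp.2 - Ap.2) * (Rp.1 - Ap.1))
            * ((Bp.1 - Ap.1) * (Rp.1 - Ap.1) + (Bp.2 - Ap.2) * (Rp.2 - Ap.2))
          + (n1 * (Bp.1 - Ap.1) + n2 * (Bp.2 - Ap.2))
            * ((Bp.1 - Ap.1) * (Rp.1 - Ap.1) + (Bp.2 - Ap.2) * (Rp.2 - Ap.2)) ^ 2) * hperp
    have h1 := (mul_eq_zero.mp h0).resolve_left hvv.ne'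
    linarith
  have c1 : (Bp - Ap).1 = Bp.1 - Ap.1 := rfl
  have c2 : (Bp - Ap).2 = Bp.2 - Ap.2 := rfl
  have c3 : (Rp - Ap).1 = Rp.1 - Ap.1 := rfl
  have c4 : (Rp - Ap).2 = Rp.2 - Ap.2 := rfl
  unfold distLine wedge enorm2
  rw [c1, c2, c3, c4]
  exact abs_div_sqrt_eq hvv hn hx

/-- Key algebraic lemma: a point `R` on the tangent line to the confocal ellipse at `p`
is equidistant (in squared, normal-vector form) from the two tangent lines from `p`
to the inner ellipse. -/
lemma key (A B lam : ℝ) (hA : 0 < A) (hB : 0 < B) (hlam : 0 < lam)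
    (n1 n2 m1 m2 p1 p2 R1 R2 : ℝ)
    (hg1 : A * n1 ^ 2 + B * n2 ^ 2 = A ^ 2 * B ^ 2)
    (hg2 : A * m1 ^ 2 + B * m2 ^ 2 = A ^ 2 * B ^ 2)
    (hg3 : n1 * p1 + n2 * p2 = A * B)
    (hg4 : m1 * p1 + m2 * p2 = A * B)
    (hg5 : p1 ^ 2 * (B + lam) + p2 ^ 2 * (A + lam) = (A + lam) * (B + lam))
    (hg6 : p1 * (R1 - p1) * (B + lam) + p2 * (R2 - p2) * (A + lam) = 0) :
    (n1 * R1 + n2 * R2 - A * B) ^ 2 * (m1 ^ 2 + m2 ^ 2)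
      = (m1 * R1 + m2 * R2 - A * B) ^ 2 * (n1 ^ 2 + n2 ^ 2) := by
  have hAl : (0 : ℝ) < A + lam := by linarith
  have hBl : (0 : ℝ) < B + lam := by linarith
  have hp : ¬(p1 = 0 ∧ p2 = 0) := by
    rintro ⟨h1, h2⟩
    rw [h1, h2] at hg5
    have := mul_pos hAl hBl
    nlinarith [hg5]
  obtain ⟨τ, hw1, hw2⟩ := ker2 (al := p1 * (B + lam)) (be := p2 * (A + lam))
    (w1 := R1 - p1) (w2 := R2 - p2)
    (by
      rintro ⟨h1, h2⟩
      exact hp ⟨(mul_eq_zero.mp h1).resolve_right hBl.ne',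
        (mul_eq_zero.mp h2).resolve_right hAl.ne'⟩)
    (by linear_combination hg6)
  obtain ⟨s, hm1, hm2⟩ := ker2 (al := p1) (be := p2) (w1 := m1 - n1) (w2 := m2 - n2) hp
    (by linear_combination hg4 - hg3)
  have hR1 : R1 = p1 - τ * (p2 * (A + lam)) := by linear_combination hw1
  have hR2 : R2 = p2 + τ * (p1 * (B + lam)) := by linear_combination hw2
  have hm1' : m1 = n1 - s * p2 := by linear_combination hm1
  have hm2' : m2 = n2 + s * p1 := by linear_combination hm2
  have ha : n1 * R1 + n2 * R2 - A * B
      = τ * (n2 * p1 * (B + lam) - n1 * p2 * (A + lam)) := by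
    linear_combination hg3 + n1 * hR1 + n2 * hR2
  have hbm : m1 * R1 + m2 * R2 - A * B
      = τ * ((n2 * p1 * (B + lam) - n1 * p2 * (A + lam)) + s * ((A + lam) * (B + lam))) := by
    linear_combination hg4 + m1 * hR1 + m2 * hR2 + τ * s * hg5
      + τ * p1 * (B + lam) * hm2' - τ * p2 * (A + lam) * hm1'
  have hmm : m1 ^ 2 + m2 ^ 2
      = (n1 ^ 2 + n2 ^ 2) + 2 * s * (n2 * p1 - n1 * p2) + s ^ 2 * (p1 ^ 2 + p2 ^ 2) := by
    linear_combination (m1 + n1 - s * p2) * hm1' + (m2 + n2 + s * p1) * hm2'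
  rw [ha, hbm, hmm]
  have hs0 : s * (s * (A * p2 ^ 2 + B * p1 ^ 2) - 2 * (A * n1 * p2 - B * n2 * p1)) = 0 := by
    linear_combination hg2 - hg1 - A * (m1 + n1 - s * p2) * hm1' - B * (m2 + n2 + s * p1) * hm2'
  have hK : 0 < A * p2 ^ 2 + B * p1 ^ 2 := by
    rcases not_and_or.mp hp with h | h
    · have h1 : 0 < B * p1 ^ 2 := by positivity
      nlinarith [mul_nonneg hA.le (sq_nonneg p2)]
    · have h1 : 0 < A * p2 ^ 2 := by positivity
      nlinarith [mul_nonneg hB.le (sq_nonneg p1)]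
  rcases mul_eq_zero.mp hs0 with hs | h2v
  · subst hs; ring
  · have h2v' : s * (A * p2 ^ 2 + B * p1 ^ 2) = 2 * (A * n1 * p2 - B * n2 * p1) := by
      linear_combination h2v
    have hwKv : (n2 * p1 - n1 * p2) * (A * p2 ^ 2 + B * p1 ^ 2)
        + (A * n1 * p2 - B * n2 * p1) * (p1 ^ 2 + p2 ^ 2)
        = (A - B) * p1 * p2 * (A * B) := by
      linear_combination (A - B) * p1 * p2 * hg3
    have hcKvL : (n2 * p1 * (B + lam) - n1 * p2 * (A + lam)) * (A * p2 ^ 2 + B * p1 ^ 2)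
        + (A * n1 * p2 - B * n2 * p1) * ((A + lam) * (B + lam))
        = lam * (A - B) * p1 * p2 * (A * B) := by
      linear_combination (-(A * n1 * p2 - B * n2 * p1)) * hg5
        + lam * (A - B) * p1 * p2 * hg3
    have hkey : (n2 * p1 * (B + lam) - n1 * p2 * (A + lam)) ^ 2
        = lam * ((A + lam) * (B + lam)) * (n1 ^ 2 + n2 ^ 2) := by
      linear_combination ((A + lam) * (B + lam)) * hg1
        - ((A + lam) * (B + lam)) * (n1 * p1 + n2 * p2 + A * B) * hg3
        + (n1 ^ 2 * (A + lam) + n2 ^ 2 * (B + lam)) * hg5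
    have hBr : (A * p2 ^ 2 + B * p1 ^ 2)
        * (2 * (n2 * p1 * (B + lam) - n1 * p2 * (A + lam)) ^ 2 * (n2 * p1 - n1 * p2)
          + s * (n2 * p1 * (B + lam) - n1 * p2 * (A + lam)) ^ 2 * (p1 ^ 2 + p2 ^ 2)
          - 2 * (n2 * p1 * (B + lam) - n1 * p2 * (A + lam)) * ((A + lam) * (B + lam))
            * (n1 ^ 2 + n2 ^ 2)
          - s * ((A + lam) * (B + lam)) ^ 2 * (n1 ^ 2 + n2 ^ 2)) = 0 := by
      linear_combination 2 * (n2 * p1 * (B + lam) - n1 * p2 * (A + lam)) ^ 2 * hwKv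
        - 2 * ((A + lam) * (B + lam)) * (n1 ^ 2 + n2 ^ 2) * hcKvL
        + ((n2 * p1 * (B + lam) - n1 * p2 * (A + lam)) ^ 2 * (p1 ^ 2 + p2 ^ 2)
            - ((A + lam) * (B + lam)) ^ 2 * (n1 ^ 2 + n2 ^ 2)) * h2v'
        + 2 * (A - B) * p1 * p2 * (A * B) * hkey
    have hfin : (A * p2 ^ 2 + B * p1 ^ 2)
        * ((τ * (n2 * p1 * (B + lam) - n1 * p2 * (A + lam))) ^ 2
            * ((n1 ^ 2 + n2 ^ 2) + 2 * s * (n2 * p1 - n1 * p2) + s ^ 2 * (p1 ^ 2 + p2 ^ 2))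
          - (τ * ((n2 * p1 * (B + lam) - n1 * p2 * (A + lam))
              + s * ((A + lam) * (B + lam)))) ^ 2 * (n1 ^ 2 + n2 ^ 2)) = 0 := by
      linear_combination τ ^ 2 * s * hBr
    have h1 := (mul_eq_zero.mp hfin).resolve_left hK.ne'
    linear_combination h1

/-- For confocal nested ellipses `E ⊂ Γ`: if the chord `P₀P₁` of `Γ` is tangent to `E` at `Q`,
`R` is the intersection of the tangent lines to `Γ` at `P₀` and `P₁`, and `P` is the
intersection of the second tangent lines to `E` through `P₀` and `P₁`, then `R` is
equidistant from the three side-lines of the triangle `P₀PP₁` (i.e. `R` is its incenter) and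
the orthogonal projection of `R` onto the line `P₀P₁` is `Q`; hence the incircle of the
triangle `P₀PP₁` touches the line `P₀P₁` exactly at `Q`. -/
theorem incircle_touches_at_tangency_point
    (a b lam : ℝ) (hb : 0 < b) (hab : b < a) (hlam : 0 < lam)
    (E G : Set (ℝ × ℝ))
    (hE : E = {p : ℝ × ℝ | p.1 ^ 2 / a ^ 2 + p.2 ^ 2 / b ^ 2 = 1})
    (hG : G = {p : ℝ × ℝ | p.1 ^ 2 / (a ^ 2 + lam) + p.2 ^ 2 / (b ^ 2 + lam) = 1})
    (P₀ P₁ Q R P Q₀ Q₁ : ℝ × ℝ)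
    (hP₀ : P₀ ∈ G) (hP₁ : P₁ ∈ G) (hne : P₀ ≠ P₁)
    -- the line P₀P₁ is tangent to E at Q
    (hQE : Q ∈ E) (hQline : Q ∈ lineThrough P₀ P₁)
    (htang : lineThrough P₀ P₁ ∩ E = {Q})
    -- R is the intersection of the tangent lines to Γ at P₀ and P₁
    (d₀ d₁ : ℝ × ℝ) (hd₀ : d₀ ≠ 0) (hd₁ : d₁ ≠ 0)
    (hT₀ : {p : ℝ × ℝ | ∃ t : ℝ, p = P₀ + t • d₀} ∩ G = {P₀})
    (hT₁ : {p : ℝ × ℝ | ∃ t : ℝ, p = P₁ + t • d₁} ∩ G = {P₁})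
    (hR₀ : ∃ t : ℝ, R = P₀ + t • d₀) (hR₁ : ∃ t : ℝ, R = P₁ + t • d₁)
    -- the second tangent line to E through P₀ touches E at Q₀ ≠ Q, and P lies on it
    (hQ₀E : Q₀ ∈ E) (hQ₀ne : Q₀ ≠ Q) (hP₀Q₀ : P₀ ≠ Q₀)
    (htang₀ : lineThrough P₀ Q₀ ∩ E = {Q₀}) (hP₀' : P ∈ lineThrough P₀ Q₀)
    -- the second tangent line to E through P₁ touches E at Q₁ ≠ Q, and P lies on it
    (hQ₁E : Q₁ ∈ E) (hQ₁ne : Q₁ ≠ Q) (hP₁Q₁ : P₁ ≠ Q₁)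
    (htang₁ : lineThrough P₁ Q₁ ∩ E = {Q₁}) (hP₁' : P ∈ lineThrough P₁ Q₁)
    -- P, P₀, P₁ are not collinear
    (hncol : wedge (P₁ - P₀) (P - P₀) ≠ 0) :
    distLine R P₀ P₁ = distLine R P₀ P ∧
    distLine R P₀ P₁ = distLine R P₁ P ∧
    dotp (R - Q) (P₁ - P₀) = 0 := by
  subst hE hG
  have ha0 : 0 < a := hb.trans hab
  have hA : 0 < a ^ 2 := by positivity
  have hB : 0 < b ^ 2 := by positivity
  have hAl : 0 < a ^ 2 + lam := by linarith
  have hBl : 0 < b ^ 2 + lam := by linarith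
  -- cleared membership equations
  have hQc : Q.1 ^ 2 * b ^ 2 + Q.2 ^ 2 * a ^ 2 = a ^ 2 * b ^ 2 := by
    have h : Q.1 ^ 2 / a ^ 2 + Q.2 ^ 2 / b ^ 2 = 1 := hQE
    field_simp at h
    linear_combination h
  have hQ0c : Q₀.1 ^ 2 * b ^ 2 + Q₀.2 ^ 2 * a ^ 2 = a ^ 2 * b ^ 2 := by
    have h : Q₀.1 ^ 2 / a ^ 2 + Q₀.2 ^ 2 / b ^ 2 = 1 := hQ₀E
    field_simp at h
    linear_combination h
  have hQ1c : Q₁.1 ^ 2 * b ^ 2 + Q₁.2 ^ 2 * a ^ 2 = a ^ 2 * b ^ 2 := by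
    have h : Q₁.1 ^ 2 / a ^ 2 + Q₁.2 ^ 2 / b ^ 2 = 1 := hQ₁E
    field_simp at h
    linear_combination h
  have hP0c : P₀.1 ^ 2 * (b ^ 2 + lam) + P₀.2 ^ 2 * (a ^ 2 + lam)
      = (a ^ 2 + lam) * (b ^ 2 + lam) := by
    have h : P₀.1 ^ 2 / (a ^ 2 + lam) + P₀.2 ^ 2 / (b ^ 2 + lam) = 1 := hP₀
    field_simp at h
    linear_combination h
  have hP1c : P₁.1 ^ 2 * (b ^ 2 + lam) + P₁.2 ^ 2 * (a ^ 2 + lam)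
      = (a ^ 2 + lam) * (b ^ 2 + lam) := by
    have h : P₁.1 ^ 2 / (a ^ 2 + lam) + P₁.2 ^ 2 / (b ^ 2 + lam) = 1 := hP₁
    field_simp at h
    linear_combination h
  -- tangency of the chord P₀P₁ at Q
  have hsub1 : ∀ t : ℝ, Q + t • (P₁ - P₀) ∈ lineThrough P₀ P₁ := by
    rcases hQline with ⟨t₀, ht₀⟩
    intro t
    exact ⟨t₀ + t, by rw [ht₀, add_smul]; abel⟩
  have hTch : Q.1 * (P₁.1 - P₀.1) * b ^ 2 + Q.2 * (P₁.2 - P₀.2) * a ^ 2 = 0 :=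
    tangent_dir hA hB Q (P₁ - P₀) (sub_ne_zero.mpr hne.symm) _ hsub1 hQE htang
  -- tangency of the line P₀Q₀ at Q₀
  have hsub2 : ∀ t : ℝ, Q₀ + t • (Q₀ - P₀) ∈ lineThrough P₀ Q₀ := by
    intro t
    exact ⟨1 + t, by rw [add_smul, one_smul]; abel⟩
  have hT0 : Q₀.1 * (Q₀.1 - P₀.1) * b ^ 2 + Q₀.2 * (Q₀.2 - P₀.2) * a ^ 2 = 0 :=
    tangent_dir hA hB Q₀ (Q₀ - P₀) (sub_ne_zero.mpr hP₀Q₀.symm) _ hsub2 hQ₀E htang₀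
  -- tangency of the line P₁Q₁ at Q₁
  have hsub3 : ∀ t : ℝ, Q₁ + t • (Q₁ - P₁) ∈ lineThrough P₁ Q₁ := by
    intro t
    exact ⟨1 + t, by rw [add_smul, one_smul]; abel⟩
  have hT1 : Q₁.1 * (Q₁.1 - P₁.1) * b ^ 2 + Q₁.2 * (Q₁.2 - P₁.2) * a ^ 2 = 0 :=
    tangent_dir hA hB Q₁ (Q₁ - P₁) (sub_ne_zero.mpr hP₁Q₁.symm) _ hsub3 hQ₁E htang₁
  -- tangency of the tangent lines to Γ at P₀, P₁
  have hTg0 : P₀.1 * d₀.1 * (b ^ 2 + lam) + P₀.2 * d₀.2 * (a ^ 2 + lam) = 0 :=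
    tangent_dir hAl hBl P₀ d₀ hd₀ {p : ℝ × ℝ | ∃ t : ℝ, p = P₀ + t • d₀}
      (fun t => ⟨t, rfl⟩) hP₀ hT₀
  have hTg1 : P₁.1 * d₁.1 * (b ^ 2 + lam) + P₁.2 * d₁.2 * (a ^ 2 + lam) = 0 :=
    tangent_dir hAl hBl P₁ d₁ hd₁ {p : ℝ × ℝ | ∃ t : ℝ, p = P₁ + t • d₁}
      (fun t => ⟨t, rfl⟩) hP₁ hT₁
  -- the chord's normal line relations
  have hNP0 : Q.1 * P₀.1 * b ^ 2 + Q.2 * P₀.2 * a ^ 2 = a ^ 2 * b ^ 2 := by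
    rcases hQline with ⟨t₀, ht₀⟩
    have e1 : Q.1 = P₀.1 + t₀ * (P₁.1 - P₀.1) := by rw [ht₀]; rfl
    have e2 : Q.2 = P₀.2 + t₀ * (P₁.2 - P₀.2) := by rw [ht₀]; rfl
    linear_combination hQc - Q.1 * b ^ 2 * e1 - Q.2 * a ^ 2 * e2 - t₀ * hTch
  have hNP1 : Q.1 * P₁.1 * b ^ 2 + Q.2 * P₁.2 * a ^ 2 = a ^ 2 * b ^ 2 := by
    linear_combination hNP0 + hTch
  have hN0P0 : Q₀.1 * P₀.1 * b ^ 2 + Q₀.2 * P₀.2 * a ^ 2 = a ^ 2 * b ^ 2 := by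
    linear_combination hQ0c - hT0
  have hN1P1 : Q₁.1 * P₁.1 * b ^ 2 + Q₁.2 * P₁.2 * a ^ 2 = a ^ 2 * b ^ 2 := by
    linear_combination hQ1c - hT1
  -- R lies on both tangent lines to Γ
  have hg60 : P₀.1 * (R.1 - P₀.1) * (b ^ 2 + lam) + P₀.2 * (R.2 - P₀.2) * (a ^ 2 + lam)
      = 0 := by
    rcases hR₀ with ⟨t, htR⟩
    have f1 : R.1 = P₀.1 + t * d₀.1 := by rw [htR]; rfl
    have f2 : R.2 = P₀.2 + t * d₀.2 := by rw [htR]; rfl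
    linear_combination t * hTg0 + P₀.1 * (b ^ 2 + lam) * f1 + P₀.2 * (a ^ 2 + lam) * f2
  have hg61 : P₁.1 * (R.1 - P₁.1) * (b ^ 2 + lam) + P₁.2 * (R.2 - P₁.2) * (a ^ 2 + lam)
      = 0 := by
    rcases hR₁ with ⟨t, htR⟩
    have f1 : R.1 = P₁.1 + t * d₁.1 := by rw [htR]; rfl
    have f2 : R.2 = P₁.2 + t * d₁.2 := by rw [htR]; rfl
    linear_combination t * hTg1 + P₁.1 * (b ^ 2 + lam) * f1 + P₁.2 * (a ^ 2 + lam) * f2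
  -- side lines through P
  have hperp0 : Q₀.1 * b ^ 2 * (P.1 - P₀.1) + Q₀.2 * a ^ 2 * (P.2 - P₀.2) = 0 := by
    rcases hP₀' with ⟨u, hu⟩
    have g1 : P.1 = P₀.1 + u * (Q₀.1 - P₀.1) := by rw [hu]; rfl
    have g2 : P.2 = P₀.2 + u * (Q₀.2 - P₀.2) := by rw [hu]; rfl
    linear_combination u * hT0 + Q₀.1 * b ^ 2 * g1 + Q₀.2 * a ^ 2 * g2
  have hperp1 : Q₁.1 * b ^ 2 * (P.1 - P₁.1) + Q₁.2 * a ^ 2 * (P.2 - P₁.2) = 0 := by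
    rcases hP₁' with ⟨u, hu⟩
    have g1 : P.1 = P₁.1 + u * (Q₁.1 - P₁.1) := by rw [hu]; rfl
    have g2 : P.2 = P₁.2 + u * (Q₁.2 - P₁.2) := by rw [hu]; rfl
    linear_combination u * hT1 + Q₁.1 * b ^ 2 * g1 + Q₁.2 * a ^ 2 * g2
  -- positivity of the normal vectors
  have hQn : 0 < (Q.1 * b ^ 2) ^ 2 + (Q.2 * a ^ 2) ^ 2 := by
    have h : ¬(Q.1 = 0 ∧ Q.2 = 0) := by
      rintro ⟨h1, h2⟩
      rw [h1, h2] at hQc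
      have h3 : (0 : ℝ) = a ^ 2 * b ^ 2 := by linear_combination hQc
      exact absurd h3.symm (mul_pos hA hB).ne'
    rcases not_and_or.mp h with h' | h'
    · exact add_pos_of_pos_of_nonneg (by positivity) (sq_nonneg _)
    · exact add_pos_of_nonneg_of_pos (sq_nonneg _) (by positivity)
  have hQ0n : 0 < (Q₀.1 * b ^ 2) ^ 2 + (Q₀.2 * a ^ 2) ^ 2 := by
    have h : ¬(Q₀.1 = 0 ∧ Q₀.2 = 0) := by
      rintro ⟨h1, h2⟩
      rw [h1, h2] at hQ0c
      have h3 : (0 : ℝ) = a ^ 2 * b ^ 2 := by linear_combination hQ0c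
      exact absurd h3.symm (mul_pos hA hB).ne'
    rcases not_and_or.mp h with h' | h'
    · exact add_pos_of_pos_of_nonneg (by positivity) (sq_nonneg _)
    · exact add_pos_of_nonneg_of_pos (sq_nonneg _) (by positivity)
  have hQ1n : 0 < (Q₁.1 * b ^ 2) ^ 2 + (Q₁.2 * a ^ 2) ^ 2 := by
    have h : ¬(Q₁.1 = 0 ∧ Q₁.2 = 0) := by
      rintro ⟨h1, h2⟩
      rw [h1, h2] at hQ1c
      have h3 : (0 : ℝ) = a ^ 2 * b ^ 2 := by linear_combination hQ1c
      exact absurd h3.symm (mul_pos hA hB).ne'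
    rcases not_and_or.mp h with h' | h'
    · exact add_pos_of_pos_of_nonneg (by positivity) (sq_nonneg _)
    · exact add_pos_of_nonneg_of_pos (sq_nonneg _) (by positivity)
  -- P is distinct from P₀ and P₁
  have hPP0 : P ≠ P₀ := by
    intro h
    apply hncol
    rw [h]
    show (P₁ - P₀).1 * (P₀ - P₀).2 - (P₁ - P₀).2 * (P₀ - P₀).1 = 0
    simp
  have hPP1 : P ≠ P₁ := by
    intro h
    apply hncol
    rw [h]
    show (P₁ - P₀).1 * (P₁ - P₀).2 - (P₁ - P₀).2 * (P₁ - P₀).1 = 0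
    ring
  -- the two key applications
  have keyI := key (a ^ 2) (b ^ 2) lam hA hB hlam
    (Q.1 * b ^ 2) (Q.2 * a ^ 2) (Q₀.1 * b ^ 2) (Q₀.2 * a ^ 2) P₀.1 P₀.2 R.1 R.2
    (by linear_combination a ^ 2 * b ^ 2 * hQc)
    (by linear_combination a ^ 2 * b ^ 2 * hQ0c)
    (by linear_combination hNP0)
    (by linear_combination hN0P0)
    (by linear_combination hP0c)
    (by linear_combination hg60)
  have keyII := key (a ^ 2) (b ^ 2) lam hA hB hlam
    (Q.1 * b ^ 2) (Q.2 * a ^ 2) (Q₁.1 * b ^ 2) (Q₁.2 * a ^ 2) P₁.1 P₁.2 R.1 R.2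
    (by linear_combination a ^ 2 * b ^ 2 * hQc)
    (by linear_combination a ^ 2 * b ^ 2 * hQ1c)
    (by linear_combination hNP1)
    (by linear_combination hN1P1)
    (by linear_combination hP1c)
    (by linear_combination hg61)
  have eA : Q.1 * b ^ 2 * R.1 + Q.2 * a ^ 2 * R.2 - a ^ 2 * b ^ 2
      = Q.1 * b ^ 2 * (R.1 - P₀.1) + Q.2 * a ^ 2 * (R.2 - P₀.2) := by
    linear_combination hNP0
  have eB : Q₀.1 * b ^ 2 * R.1 + Q₀.2 * a ^ 2 * R.2 - a ^ 2 * b ^ 2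
      = Q₀.1 * b ^ 2 * (R.1 - P₀.1) + Q₀.2 * a ^ 2 * (R.2 - P₀.2) := by
    linear_combination hN0P0
  have eC : Q₁.1 * b ^ 2 * R.1 + Q₁.2 * a ^ 2 * R.2 - a ^ 2 * b ^ 2
      = Q₁.1 * b ^ 2 * (R.1 - P₁.1) + Q₁.2 * a ^ 2 * (R.2 - P₁.2) := by
    linear_combination hN1P1
  rw [eA, eB] at keyI
  rw [eA, eC] at keyII
  -- the distances as normal-vector expressions
  have d1 : distLine R P₀ P₁
      = |Q.1 * b ^ 2 * (R.1 - P₀.1) + Q.2 * a ^ 2 * (R.2 - P₀.2)|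
        / Real.sqrt ((Q.1 * b ^ 2) ^ 2 + (Q.2 * a ^ 2) ^ 2) :=
    distLine_eq R P₀ P₁ (Q.1 * b ^ 2) (Q.2 * a ^ 2) hQn hne.symm
      (by linear_combination hTch)
  have d2 : distLine R P₀ P
      = |Q₀.1 * b ^ 2 * (R.1 - P₀.1) + Q₀.2 * a ^ 2 * (R.2 - P₀.2)|
        / Real.sqrt ((Q₀.1 * b ^ 2) ^ 2 + (Q₀.2 * a ^ 2) ^ 2) :=
    distLine_eq R P₀ P (Q₀.1 * b ^ 2) (Q₀.2 * a ^ 2) hQ0n hPP0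
      (by linear_combination hperp0)
  have d3 : distLine R P₁ P
      = |Q₁.1 * b ^ 2 * (R.1 - P₁.1) + Q₁.2 * a ^ 2 * (R.2 - P₁.2)|
        / Real.sqrt ((Q₁.1 * b ^ 2) ^ 2 + (Q₁.2 * a ^ 2) ^ 2) :=
    distLine_eq R P₁ P (Q₁.1 * b ^ 2) (Q₁.2 * a ^ 2) hQ1n hPP1
      (by linear_combination hperp1)
  refine ⟨?_, ?_, ?_⟩
  · rw [d1, d2]
    exact abs_div_sqrt_eq hQn hQ0n (by linear_combination keyI)
  · rw [d1, d3]
    exact abs_div_sqrt_eq hQn hQ1n (by linear_combination keyII)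
  · -- the projection statement
    have hMR0 : P₀.1 * R.1 * (b ^ 2 + lam) + P₀.2 * R.2 * (a ^ 2 + lam)
        = (a ^ 2 + lam) * (b ^ 2 + lam) := by
      linear_combination hg60 + hP0c
    have hMR1 : P₁.1 * R.1 * (b ^ 2 + lam) + P₁.2 * R.2 * (a ^ 2 + lam)
        = (a ^ 2 + lam) * (b ^ 2 + lam) := by
      linear_combination hg61 + hP1c
    have hD : P₀.1 * P₁.2 - P₁.1 * P₀.2 ≠ 0 := by
      intro hD0
      have hk : ∃ k : ℝ, P₁.1 = k * P₀.1 ∧ P₁.2 = k * P₀.2 := by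
        by_cases hx0 : P₀.1 = 0
        · have hy0 : P₀.2 ≠ 0 := by
            intro hy
            rw [hx0, hy] at hP0c
            have h3 : (0 : ℝ) = (a ^ 2 + lam) * (b ^ 2 + lam) := by linear_combination hP0c
            exact absurd h3.symm (mul_pos hAl hBl).ne'
          have hx1 : P₁.1 = 0 := by
            have h' : P₁.1 * P₀.2 = 0 := by rw [hx0] at hD0; linear_combination -hD0
            exact (mul_eq_zero.mp h').resolve_right hy0
          exact ⟨P₁.2 / P₀.2, by rw [hx1, hx0]; ring, by field_simp⟩
        · refine ⟨P₁.1 / P₀.1, by field_simp, ?_⟩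
          field_simp
          linear_combination hD0
      obtain ⟨k, hx1, hy1⟩ := hk
      have h5 : (k - 1) * (k + 1) * ((a ^ 2 + lam) * (b ^ 2 + lam)) = 0 := by
        linear_combination hP1c - k ^ 2 * hP0c - (P₁.1 + k * P₀.1) * (b ^ 2 + lam) * hx1
          - (P₁.2 + k * P₀.2) * (a ^ 2 + lam) * hy1
      have h6 : (k - 1) * (k + 1) = 0 := by
        rcases mul_eq_zero.mp h5 with h | h
        · exact h
        · exact absurd h (mul_pos hAl hBl).ne'
      rcases mul_eq_zero.mp h6 with h | h
      · have hk1 : k = 1 := by linarith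
        exact hne (Prod.ext_iff.mpr ⟨by rw [hx1, hk1]; ring, by rw [hy1, hk1]; ring⟩).symm
      · have hk1 : k = -1 := by linarith
        rw [hk1] at hx1 hy1
        have hcon : (2 : ℝ) * (a ^ 2 * b ^ 2) = 0 := by
          linear_combination -hNP0 - hNP1 + Q.1 * b ^ 2 * hx1 + Q.2 * a ^ 2 * hy1
        exact absurd hcon (by positivity : (0 : ℝ) < 2 * (a ^ 2 * b ^ 2)).ne'
    have hq1D : Q.1 * (P₀.1 * P₁.2 - P₁.1 * P₀.2) = a ^ 2 * (P₁.2 - P₀.2) := by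
      have h' : Q.1 * (P₀.1 * P₁.2 - P₁.1 * P₀.2) * b ^ 2
          = a ^ 2 * (P₁.2 - P₀.2) * b ^ 2 := by
        linear_combination P₁.2 * hNP0 - P₀.2 * hNP1
      exact mul_right_cancel₀ hB.ne' h'
    have hq2D : Q.2 * (P₀.1 * P₁.2 - P₁.1 * P₀.2) = -(b ^ 2 * (P₁.1 - P₀.1)) := by
      have h' : Q.2 * (P₀.1 * P₁.2 - P₁.1 * P₀.2) * a ^ 2
          = -(b ^ 2 * (P₁.1 - P₀.1)) * a ^ 2 := by
        linear_combination P₀.1 * hNP1 - P₁.1 * hNP0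
      exact mul_right_cancel₀ hA.ne' h'
    have hR1D : R.1 * (P₀.1 * P₁.2 - P₁.1 * P₀.2) = (a ^ 2 + lam) * (P₁.2 - P₀.2) := by
      have h' : R.1 * (P₀.1 * P₁.2 - P₁.1 * P₀.2) * (b ^ 2 + lam)
          = (a ^ 2 + lam) * (P₁.2 - P₀.2) * (b ^ 2 + lam) := by
        linear_combination P₁.2 * hMR0 - P₀.2 * hMR1
      exact mul_right_cancel₀ hBl.ne' h'
    have hR2D : R.2 * (P₀.1 * P₁.2 - P₁.1 * P₀.2)
        = -((b ^ 2 + lam) * (P₁.1 - P₀.1)) := by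
      have h' : R.2 * (P₀.1 * P₁.2 - P₁.1 * P₀.2) * (a ^ 2 + lam)
          = -((b ^ 2 + lam) * (P₁.1 - P₀.1)) * (a ^ 2 + lam) := by
        linear_combination P₀.1 * hMR1 - P₁.1 * hMR0
      exact mul_right_cancel₀ hAl.ne' h'
    have hfin : ((R.1 - Q.1) * (P₁.1 - P₀.1) + (R.2 - Q.2) * (P₁.2 - P₀.2))
        * (P₀.1 * P₁.2 - P₁.1 * P₀.2) = 0 := by
      linear_combination (P₁.1 - P₀.1) * hR1D - (P₁.1 - P₀.1) * hq1D
        + (P₁.2 - P₀.2) * hR2D - (P₁.2 - P₀.2) * hq2D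
    have hres := (mul_eq_zero.mp hfin).resolve_right hD
    show (R - Q).1 * (P₁ - P₀).1 + (R - Q).2 * (P₁ - P₀).2 = 0
    exact hres

end
end

section
/- Let ℓ > 0 and let k : ℝ → ℝ be a continuous, ℓ-periodic, everywhere positive function with ∫₀^ℓ k(s) ds = 2π (the curvature of a smooth closed strictly convex curve of length ℓ). Set L := ∫₀^ℓ k(s)^{2/3} ds. Then L³ ≤ 4π²ℓ, i.e. (1/4)L³ − π²ℓ ≤ 0, with equality if and only if k is constant (equal to 2π/ℓ), i.e. if and only if the curve is a circle. Equivalently, with β₁ = ℓ and β₃ = L³/12 the first two odd Taylor coefficients of Mather's β-function of the outer length billiard, 3β₃ − π²β₁ ≤ 0 with equality exactly for circles. -/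
/-!
`L³ ≤ ℓ (∫ k)²` is Hölder's inequality `∫ k^(2/3) ≤ ℓ^(1/3) (∫ k)^(2/3)`, obtained by
integrating the weighted AM-GM inequality `3 t k^(2/3) ≤ t³ + 2 k` (equality iff `k = t³`) with
`t³ = (∫ k) / ℓ` the mean curvature. Equality in the integrated inequality forces pointwise equality
on a period by continuity, and hence everywhere by periodicity.
-/

open Set intervalIntegral

namespace Real

lemma pow_three_rpow_one_third {t : ℝ} (ht : 0 ≤ t) : (t ^ 3) ^ ((1:ℝ)/3) = t := by
  simpa using pow_rpow_inv_natCast ht (n := 3) three_ne_zero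

lemma three_mul_mul_rpow_two_thirds_le {t y : ℝ} (ht : 0 ≤ t) (hy : 0 ≤ y) :
    3 * t * y ^ ((2:ℝ)/3) ≤ t ^ 3 + 2 * y := by
  have := geom_mean_le_arith_mean2_weighted (w₁ := 1/3) (w₂ := 2/3) (p₁ := t ^ 3) (p₂ := y)
    (by norm_num) (by norm_num) (by positivity) hy (by norm_num)
  rw [pow_three_rpow_one_third ht] at this
  linarith

lemma three_mul_mul_rpow_two_thirds_eq_iff {t y : ℝ} (ht : 0 ≤ t) (hy : 0 ≤ y) :
    3 * t * y ^ ((2:ℝ)/3) = t ^ 3 + 2 * y ↔ y = t ^ 3 := by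
  have := geom_mean_eq_arith_mean2_weighted_iff_of_pos (w₁ := 1/3) (w₂ := 2/3) (p₁ := t ^ 3)
    (p₂ := y) (by norm_num) (by norm_num) (by positivity) hy (by norm_num)
  rw [pow_three_rpow_one_third ht, eq_comm (a := t ^ 3)] at this
  rw [← this]
  constructor <;> intro h <;> linarith

end Real

lemma pow_three_le_mul_sq_iff {c t L I : ℝ} (hc : 0 ≤ c) (ht : 0 < t) (hL : 0 ≤ L)
    (hcube : c * t ^ 3 = I) : L ^ 3 ≤ c * I ^ 2 ↔ t * L ≤ I := by
  have hI : 0 ≤ I := hcube ▸ by positivity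
  have hI3 : I ^ 3 = t ^ 3 * (c * I ^ 2) := by rw [← hcube]; ring
  rw [← pow_le_pow_iff_left₀ (by positivity) hI three_ne_zero, mul_pow, hI3,
    mul_le_mul_iff_right₀ (pow_pos ht 3)]

lemma pow_three_eq_mul_sq_iff {c t L I : ℝ} (hc : 0 ≤ c) (ht : 0 < t) (hL : 0 ≤ L)
    (hcube : c * t ^ 3 = I) : L ^ 3 = c * I ^ 2 ↔ t * L = I := by
  have hI : 0 ≤ I := hcube ▸ by positivity
  have hI3 : I ^ 3 = t ^ 3 * (c * I ^ 2) := by rw [← hcube]; ring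
  rw [← pow_left_inj₀ (by positivity) hI three_ne_zero, mul_pow, hI3,
    mul_right_inj' (pow_pos ht 3).ne']

section TwoThirds

variable {a b t : ℝ} {k : ℝ → ℝ}

lemma integral_pow_three_add_two_mul (hk : IntervalIntegrable k MeasureTheory.volume a b) :
    ∫ s in a..b, (t ^ 3 + 2 * k s) = (b - a) * t ^ 3 + 2 * ∫ s in a..b, k s := by
  rw [integral_add intervalIntegrable_const (hk.const_mul 2), integral_const, integral_const_mul,
    smul_eq_mul]

lemma continuousOn_rpow_two_thirds (hk : ContinuousOn k (Icc a b)) :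
    ContinuousOn (fun s => k s ^ ((2:ℝ)/3)) (Icc a b) :=
  hk.rpow_const fun _ _ => Or.inr (by norm_num)

lemma three_mul_integral_rpow_two_thirds_le (hab : a ≤ b) (hk : ContinuousOn k (Icc a b))
    (hk0 : ∀ s ∈ Icc a b, 0 ≤ k s) (ht : 0 ≤ t) :
    3 * t * ∫ s in a..b, k s ^ ((2:ℝ)/3) ≤ (b - a) * t ^ 3 + 2 * ∫ s in a..b, k s := by
  rw [← integral_pow_three_add_two_mul (hk.intervalIntegrable_of_Icc hab), ← integral_const_mul]
  exact integral_mono_on hab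
    (((continuousOn_rpow_two_thirds hk).const_mul _).intervalIntegrable_of_Icc hab)
    (((hk.const_mul 2).const_add _).intervalIntegrable_of_Icc hab)
    fun s hs => Real.three_mul_mul_rpow_two_thirds_le ht (hk0 s hs)

lemma three_mul_integral_rpow_two_thirds_eq_iff (hab : a < b) (hk : ContinuousOn k (Icc a b))
    (hk0 : ∀ s ∈ Icc a b, 0 ≤ k s) (ht : 0 ≤ t) :
    3 * t * ∫ s in a..b, k s ^ ((2:ℝ)/3) = (b - a) * t ^ 3 + 2 * ∫ s in a..b, k s ↔
      ∀ s ∈ Icc a b, k s = t ^ 3 := by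
  rw [← integral_pow_three_add_two_mul (hk.intervalIntegrable_of_Icc hab.le),
    ← integral_const_mul]
  constructor
  · intro heq
    by_contra! hne
    obtain ⟨s, hs, hks⟩ := hne
    refine heq.not_lt (integral_lt_integral_of_continuousOn_of_le_of_exists_lt hab
      ((continuousOn_rpow_two_thirds hk).const_mul _) ((hk.const_mul 2).const_add _)
      (fun s hs => Real.three_mul_mul_rpow_two_thirds_le ht (hk0 s (Ioc_subset_Icc_self hs)))
      ⟨s, hs, ?_⟩)
    exact (Real.three_mul_mul_rpow_two_thirds_le ht (hk0 s hs)).lt_of_ne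
      (mt (Real.three_mul_mul_rpow_two_thirds_eq_iff ht (hk0 s hs)).mp hks)
  · intro hconst
    refine integral_congr fun s hs => ?_
    rw [uIcc_of_le hab.le] at hs
    exact (Real.three_mul_mul_rpow_two_thirds_eq_iff ht (hk0 s hs)).mpr (hconst s hs)

lemma exists_pos_mul_pow_three_eq_integral (hab : a < b) (hk : ContinuousOn k (Icc a b))
    (hpos : ∀ s ∈ Icc a b, 0 < k s) :
    ∃ t, 0 < t ∧ (b - a) * t ^ 3 = ∫ s in a..b, k s := by
  have hI : 0 < ∫ s in a..b, k s :=
    integral_pos hab hk (fun s hs => (hpos s (Ioc_subset_Icc_self hs)).le)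
      ⟨a, left_mem_Icc.2 hab.le, hpos a (left_mem_Icc.2 hab.le)⟩
  refine ⟨((∫ s in a..b, k s) / (b - a)) ^ ((3 : ℕ)⁻¹ : ℝ), by positivity, ?_⟩
  rw [Real.rpow_inv_natCast_pow (by positivity) three_ne_zero]
  field_simp [(sub_pos.2 hab).ne']

theorem integral_rpow_two_thirds_pow_three_le (hab : a < b) (hk : ContinuousOn k (Icc a b))
    (hpos : ∀ s ∈ Icc a b, 0 < k s) :
    (∫ s in a..b, k s ^ ((2:ℝ)/3)) ^ 3 ≤ (b - a) * (∫ s in a..b, k s) ^ 2 := by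
  have hk0 : ∀ s ∈ Icc a b, 0 ≤ k s := fun s hs => (hpos s hs).le
  obtain ⟨t, ht, hcube⟩ := exists_pos_mul_pow_three_eq_integral hab hk hpos
  rw [pow_three_le_mul_sq_iff (sub_nonneg.2 hab.le) ht
    (integral_nonneg hab.le fun s hs => Real.rpow_nonneg (hk0 s hs) _) hcube]
  have := three_mul_integral_rpow_two_thirds_le hab.le hk hk0 ht.le
  linarith

theorem integral_rpow_two_thirds_pow_three_eq_iff (hab : a < b) (hk : ContinuousOn k (Icc a b))
    (hpos : ∀ s ∈ Icc a b, 0 < k s) :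
    (∫ s in a..b, k s ^ ((2:ℝ)/3)) ^ 3 = (b - a) * (∫ s in a..b, k s) ^ 2 ↔
      ∀ s ∈ Icc a b, k s = (∫ s in a..b, k s) / (b - a) := by
  have hk0 : ∀ s ∈ Icc a b, 0 ≤ k s := fun s hs => (hpos s hs).le
  obtain ⟨t, ht, hcube⟩ := exists_pos_mul_pow_three_eq_integral hab hk hpos
  rw [pow_three_eq_mul_sq_iff (sub_nonneg.2 hab.le) ht
    (integral_nonneg hab.le fun s hs => Real.rpow_nonneg (hk0 s hs) _) hcube,
    ← hcube, mul_div_cancel_left₀ _ (sub_pos.2 hab).ne',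
    ← three_mul_integral_rpow_two_thirds_eq_iff hab hk hk0 ht.le, ← hcube]
  constructor <;> intro h <;> linarith

end TwoThirds

/-- The coefficients `β₁ = ℓ` and `β₃ = L³/12` of Mather's β-function of the outer length
billiard recognize the circle: for a closed strictly convex curve of length `ℓ` with positive
curvature `k` and total curvature `2π`, setting `L = ∫₀^ℓ k^(2/3)`, one has
`(1/4)L³ - π²ℓ ≤ 0` (i.e. `3β₃ + π²β₁ ≤ 0` with `β₃ = L³/12`, `β₁ = ℓ` up to sign conventions),
with equality iff `k` is constant, i.e. iff the curve is a circle. -/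
theorem beta_coefficients_recognize_circle
    (ℓ : ℝ) (hℓ : 0 < ℓ) (k : ℝ → ℝ) (hk : Continuous k)
    (hper : ∀ s, k (s + ℓ) = k s) (hpos : ∀ s, 0 < k s)
    (htot : (∫ s in (0:ℝ)..ℓ, k s) = 2 * Real.pi)
    (L : ℝ) (hL : L = ∫ s in (0:ℝ)..ℓ, (k s) ^ ((2:ℝ)/3)) :
    (1/4) * L ^ 3 - Real.pi ^ 2 * ℓ ≤ 0 ∧
    ((1/4) * L ^ 3 - Real.pi ^ 2 * ℓ = 0 ↔ ∀ s, k s = 2 * Real.pi / ℓ) := by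
  have hle := integral_rpow_two_thirds_pow_three_le hℓ hk.continuousOn fun s _ => hpos s
  have heq := integral_rpow_two_thirds_pow_three_eq_iff hℓ hk.continuousOn fun s _ => hpos s
  rw [← hL, htot, sub_zero] at hle heq
  have hrange : k '' Icc 0 ℓ = range k := by
    simpa using Function.Periodic.image_Icc hper hℓ 0
  refine ⟨by linarith, ?_⟩
  calc (1/4) * L ^ 3 - Real.pi ^ 2 * ℓ = 0 ↔ L ^ 3 = ℓ * (2 * Real.pi) ^ 2 := by
        constructor <;> intro h <;> linarith
    _ ↔ ∀ s ∈ Icc 0 ℓ, k s = 2 * Real.pi / ℓ := heq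
    _ ↔ ∀ s, k s = 2 * Real.pi / ℓ := by
        rw [← forall_mem_range (p := (· = 2 * Real.pi / ℓ)), ← hrange, forall_mem_image]
end

section
/- There exist δ > 0 and C > 0 such that for all r ∈ ℝ and all s with 0 < s − r < δ, writing δ₀ := s − r and evaluating k and its derivatives at r, one has |γ'(r) ∧ γ'(s) − [k δ₀ + (k'/2) δ₀² + ((k'' − k³)/6) δ₀³ + ((k''' − 6k²k')/24) δ₀⁴ + ((k⁵ − 10k²k'' − 15k k'² + k⁽⁴⁾)/120) δ₀⁵]| ≤ C δ₀⁶. -/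
/-!
Write `T = γ'`. Unit speed makes `T'` orthogonal to `T`, so `T' = k J T` (Frenet). For fixed `r`
the functions `g t = T r ∧ T t` and `h t = T r · T t` (the sine and cosine of the angle turned
between `r` and `t`) therefore solve `g' = k h`, `h' = -k g` with `g r = 0`, `h r = 1`. Leibniz's
rule turns this system into a recursion for the derivatives of `g` and `h` at `r`, which yields the
degree-5 Taylor polynomial of `g = γ'(r) ∧ γ'(·)`. The remainder is controlled by Taylor's theorem,
since `g⁽⁶⁾ t = T r ∧ T⁽⁶⁾ t` is bounded independently of `r` and `t` by periodicity.
-/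

noncomputable section

/-- Rotation of `ℝ²` by `+π/2`. -/
def Jmap (u : ℝ × ℝ) : ℝ × ℝ := (-u.2, u.1)

open Set Finset
open scoped Nat ContDiff

theorem wedge_self (u : ℝ × ℝ) : wedge u u = 0 := by
  rw [wedge]; ring

@[simp]
theorem zero_wedge (u : ℝ × ℝ) : wedge 0 u = 0 := by
  simp [wedge]

@[simp]
theorem zero_dotp (u : ℝ × ℝ) : dotp 0 u = 0 := by
  simp [dotp]

theorem dotp_comm (u v : ℝ × ℝ) : dotp u v = dotp v u := by
  simp only [dotp]; ring

theorem wedge_smul_Jmap (u v : ℝ × ℝ) (c : ℝ) : wedge u (c • Jmap v) = c * dotp u v := by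
  simp only [wedge, dotp, Jmap, Prod.smul_mk, smul_eq_mul]; ring

theorem dotp_smul_Jmap (u v : ℝ × ℝ) (c : ℝ) : dotp u (c • Jmap v) = -(c * wedge u v) := by
  simp only [wedge, dotp, Jmap, Prod.smul_mk, smul_eq_mul]; ring

theorem eq_dotp_Jmap_smul_Jmap (u v : ℝ × ℝ) (hu : dotp u u = 1) (huv : dotp u v = 0) :
    v = dotp v (Jmap u) • Jmap u := by
  simp only [dotp, Jmap, Prod.smul_mk, smul_eq_mul] at *
  ext
  · linear_combination (-v.1) * hu + u.1 * huv
  · linear_combination (-v.2) * hu + u.2 * huv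

theorem abs_wedge_le (u v : ℝ × ℝ) : |wedge u v| ≤ 2 * ‖u‖ * ‖v‖ := by
  have hu₁ : |u.1| ≤ ‖u‖ := norm_fst_le u
  have hu₂ : |u.2| ≤ ‖u‖ := norm_snd_le u
  have hv₁ : |v.1| ≤ ‖v‖ := norm_fst_le v
  have hv₂ : |v.2| ≤ ‖v‖ := norm_snd_le v
  calc |wedge u v| ≤ |u.1| * |v.2| + |u.2| * |v.1| := by
        rw [wedge, ← abs_mul, ← abs_mul]; exact abs_sub _ _
    _ ≤ ‖u‖ * ‖v‖ + ‖u‖ * ‖v‖ := by gcongr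
    _ = 2 * ‖u‖ * ‖v‖ := by ring

section ProdDeriv

variable {𝕜 E F : Type*} [NontriviallyNormedField 𝕜] [NormedAddCommGroup E] [NormedSpace 𝕜 E]
  [NormedAddCommGroup F] [NormedSpace 𝕜 F] {f : 𝕜 → E × F} {f' : E × F} {t : 𝕜}

theorem HasDerivAt.fst (hf : HasDerivAt f f' t) : HasDerivAt (fun t => (f t).1) f'.1 t :=
  hasFDerivAt_fst.comp_hasDerivAt (f := f) t hf

theorem HasDerivAt.snd (hf : HasDerivAt f f' t) : HasDerivAt (fun t => (f t).2) f'.2 t :=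
  hasFDerivAt_snd.comp_hasDerivAt (f := f) t hf

end ProdDeriv

section PlanarDeriv

variable {f g : ℝ → ℝ × ℝ} {f' g' : ℝ × ℝ} {t : ℝ}

theorem HasDerivAt.wedge (hf : HasDerivAt f f' t) (hg : HasDerivAt g g' t) :
    HasDerivAt (fun t => wedge (f t) (g t)) (wedge f' (g t) + wedge (f t) g') t :=
  ((hf.fst.fun_mul hg.snd).fun_sub (hf.snd.fun_mul hg.fst)).congr_deriv
    (by simp only [_root_.wedge]; ring)

theorem HasDerivAt.dotp (hf : HasDerivAt f f' t) (hg : HasDerivAt g g' t) :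
    HasDerivAt (fun t => dotp (f t) (g t)) (dotp f' (g t) + dotp (f t) g') t :=
  ((hf.fst.fun_mul hg.fst).fun_add (hf.snd.fun_mul hg.snd)).congr_deriv
    (by simp only [_root_.dotp]; ring)

theorem iteratedDeriv_const_wedge (hf : ContDiff ℝ ∞ f) (u : ℝ × ℝ) (n : ℕ) :
    iteratedDeriv n (fun t => wedge u (f t)) = fun t => wedge u (iteratedDeriv n f t) := by
  induction n generalizing f with
  | zero => simp
  | succ n ih =>
    have hderiv : deriv (fun t => wedge u (f t)) = fun t => wedge u (deriv f t) := by
      funext t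
      simpa using ((hasDerivAt_const t u).wedge (hf.differentiable (by simp) t).hasDerivAt).deriv
    rw [iteratedDeriv_succ', hderiv, ih (contDiff_infty_iff_deriv.mp hf).2, iteratedDeriv_succ']

end PlanarDeriv

theorem Function.Periodic.iteratedDeriv {𝕜 F : Type*} [NontriviallyNormedField 𝕜]
    [NormedAddCommGroup F] [NormedSpace 𝕜 F] {f : 𝕜 → F} {c : 𝕜}
    (hf : Function.Periodic f c) (n : ℕ) : Function.Periodic (_root_.iteratedDeriv n f) c := by
  induction n with
  | zero => simpa
  | succ n ih =>
    intro x
    rw [iteratedDeriv_succ, ← deriv_comp_add_const]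
    exact congrArg (deriv · x) (funext ih)

theorem Function.Periodic.exists_pos_norm_iteratedDeriv_le {E : Type*} [NormedAddCommGroup E]
    [NormedSpace ℝ E] {f : ℝ → E} {c : ℝ} (hf : Function.Periodic f c) (hc : c ≠ 0)
    (hf' : ContDiff ℝ ∞ f) (n : ℕ) : ∃ M > 0, ∀ x, ‖_root_.iteratedDeriv n f x‖ ≤ M := by
  have hcont : Continuous (_root_.iteratedDeriv n f) := by
    rw [iteratedDeriv_eq_iterate]; exact (hf'.iterate_deriv n).continuous
  obtain ⟨M, hM, hbound⟩ :=
    ((hf.iteratedDeriv n).isBounded_of_continuous hc hcont).exists_pos_norm_le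
  exact ⟨M, hM, fun x => hbound _ (mem_range_self x)⟩

theorem taylor_mean_remainder_bound_of_contDiff {E : Type*} [NormedAddCommGroup E]
    [NormedSpace ℝ E] {f : ℝ → E} {a x C : ℝ} {n : ℕ} (hf : ContDiff ℝ (n + 1) f) (hax : a < x)
    (hC : ∀ y ∈ Icc a x, ‖iteratedDeriv (n + 1) f y‖ ≤ C) :
    ‖f x - ∑ i ∈ range (n + 1), ((i ! : ℝ)⁻¹ * (x - a) ^ i) • iteratedDeriv i f a‖ ≤
      C * (x - a) ^ (n + 1) / n ! := by
  have hwithin : ∀ m ≤ n + 1, ∀ y ∈ Icc a x,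
      iteratedDerivWithin m f (Icc a x) y = iteratedDeriv m f y := fun m hm y hy =>
    iteratedDerivWithin_eq_iteratedDeriv (uniqueDiffOn_Icc hax)
      (hf.of_le (by exact_mod_cast hm)).contDiffAt hy
  have key := taylor_mean_remainder_bound hax.le hf.contDiffOn (right_mem_Icc.2 hax.le)
    fun y hy => (hwithin (n + 1) le_rfl y hy).symm ▸ hC y hy
  rwa [taylor_within_apply, Finset.sum_congr rfl fun i hi => by
    rw [hwithin i (mem_range.1 hi).le a (left_mem_Icc.2 hax.le)]] at key

theorem iteratedDeriv_succ_eq_sum_of_deriv_eq_mul {κ g h : ℝ → ℝ} (hκ : ContDiff ℝ ∞ κ)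
    (hh : ContDiff ℝ ∞ h) (hg' : deriv g = κ * h) (n : ℕ) (x : ℝ) :
    iteratedDeriv (n + 1) g x = ∑ i ∈ range (n + 1),
      n.choose i * iteratedDeriv i κ x * iteratedDeriv (n - i) h x := by
  rw [iteratedDeriv_succ', hg', iteratedDeriv_mul (hκ.of_le (by exact_mod_cast le_top)).contDiffAt
    (hh.of_le (by exact_mod_cast le_top)).contDiffAt]

def denominatorExpansion (κ : ℝ → ℝ) (r δ : ℝ) : ℝ :=
  κ r * δ + deriv κ r / 2 * δ ^ 2 + (iteratedDeriv 2 κ r - κ r ^ 3) / 6 * δ ^ 3 +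
    (iteratedDeriv 3 κ r - 6 * κ r ^ 2 * deriv κ r) / 24 * δ ^ 4 +
    (κ r ^ 5 - 10 * κ r ^ 2 * iteratedDeriv 2 κ r - 15 * κ r * deriv κ r ^ 2 +
      iteratedDeriv 4 κ r) / 120 * δ ^ 5

theorem sum_iteratedDeriv_eq_denominatorExpansion {κ g h : ℝ → ℝ} (hκ : ContDiff ℝ ∞ κ)
    (hg : ContDiff ℝ ∞ g) (hh : ContDiff ℝ ∞ h) (hg' : deriv g = κ * h)
    (hh' : deriv h = -(κ * g)) {r : ℝ} (hg₀ : g r = 0) (hh₀ : h r = 1) (δ : ℝ) :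
    ∑ i ∈ range 6, ((i ! : ℝ)⁻¹ * δ ^ i) • iteratedDeriv i g r =
      denominatorExpansion κ r δ := by
  have hg'' (n : ℕ) := iteratedDeriv_succ_eq_sum_of_deriv_eq_mul hκ hh hg' n r
  have hh'' (n : ℕ) := iteratedDeriv_succ_eq_sum_of_deriv_eq_mul (h := -g) hκ hg.neg
    (by rw [hh', mul_neg]) n r
  simp only [iteratedDeriv_neg] at hh''
  have g₁ : iteratedDeriv 1 g r = κ r := by simp [hg'' 0, hh₀]
  have h₁ : iteratedDeriv 1 h r = 0 := by simp [hh'' 0, hg₀]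
  have g₂ : iteratedDeriv 2 g r = deriv κ r := by simp [hg'' 1, sum_range_succ, hh₀, h₁]
  have h₂ : iteratedDeriv 2 h r = -κ r ^ 2 := by
    simp [hh'' 1, sum_range_succ, hg₀, g₁]; ring
  have g₃ : iteratedDeriv 3 g r = iteratedDeriv 2 κ r - κ r ^ 3 := by
    simp [hg'' 2, sum_range_succ, hh₀, h₁, h₂]; ring
  have h₃ : iteratedDeriv 3 h r = -3 * κ r * deriv κ r := by
    simp [hh'' 2, sum_range_succ, hg₀, g₁, g₂]; ring
  have g₄ : iteratedDeriv 4 g r = iteratedDeriv 3 κ r - 6 * κ r ^ 2 * deriv κ r := by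
    simp [hg'' 3, sum_range_succ, hh₀, h₁, h₂, h₃]; ring
  have h₄ : iteratedDeriv 4 h r =
      κ r ^ 4 - 4 * κ r * iteratedDeriv 2 κ r - 3 * deriv κ r ^ 2 := by
    simp [hh'' 3, sum_range_succ, hg₀, g₁, g₂, g₃]; ring
  have g₅ : iteratedDeriv 5 g r = κ r ^ 5 - 10 * κ r ^ 2 * iteratedDeriv 2 κ r -
      15 * κ r * deriv κ r ^ 2 + iteratedDeriv 4 κ r := by
    simp [hg'' 4, sum_range_succ, Nat.choose, hh₀, h₁, h₂, h₃, h₄]; ring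
  simp [sum_range_succ, hg₀, g₁, g₂, g₃, g₄, g₅, denominatorExpansion, Nat.factorial]
  ring

theorem hasDerivAt_deriv_of_unit_speed {γ : ℝ → ℝ × ℝ} {k : ℝ → ℝ} (hγ : ContDiff ℝ ∞ γ)
    (hunit : ∀ s, dotp (deriv γ s) (deriv γ s) = 1)
    (hkdef : ∀ s, k s = dotp (iteratedDeriv 2 γ s) (Jmap (deriv γ s))) (t : ℝ) :
    HasDerivAt (deriv γ) (k t • Jmap (deriv γ t)) t := by
  have hderiv (t : ℝ) : HasDerivAt (deriv γ) (iteratedDeriv 2 γ t) t := by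
    rw [iteratedDeriv_succ, iteratedDeriv_one]
    exact ((contDiff_infty_iff_deriv.mp hγ).2.differentiable (by simp) t).hasDerivAt
  have horth : dotp (deriv γ t) (iteratedDeriv 2 γ t) = 0 := by
    have hconst : HasDerivAt (fun s => dotp (deriv γ s) (deriv γ s)) 0 t := by
      simpa only [hunit] using hasDerivAt_const t (1 : ℝ)
    have h := ((hderiv t).dotp (hderiv t)).unique hconst
    rw [dotp_comm] at h
    linarith
  rw [hkdef t]
  convert hderiv t
  exact (eq_dotp_Jmap_smul_Jmap _ _ (hunit t) horth).symm

theorem abs_wedge_sub_denominatorExpansion_le {T : ℝ → ℝ × ℝ} {k : ℝ → ℝ}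
    (hT : ContDiff ℝ ∞ T) (hk : ContDiff ℝ ∞ k) (hframe : ∀ t, HasDerivAt T (k t • Jmap (T t)) t)
    {r s M₀ M₆ : ℝ} (hr : dotp (T r) (T r) = 1) (hrs : r < s) (hM₀ : ‖T r‖ ≤ M₀)
    (hM₆ : ∀ t ∈ Icc r s, ‖iteratedDeriv 6 T t‖ ≤ M₆) :
    |wedge (T r) (T s) - denominatorExpansion k r (s - r)| ≤ 2 * M₀ * M₆ / 5 ! * (s - r) ^ 6 := by
  set g := fun t => wedge (T r) (T t) with hg_def
  set h := fun t => dotp (T r) (T t) with hh_def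
  have hg' : deriv g = k * h := funext fun t => by
    simpa [wedge_smul_Jmap] using ((hasDerivAt_const t (T r)).wedge (hframe t)).deriv
  have hh' : deriv h = -(k * g) := funext fun t => by
    simpa [dotp_smul_Jmap] using ((hasDerivAt_const t (T r)).dotp (hframe t)).deriv
  have hg : ContDiff ℝ ∞ g := by simp only [hg_def, wedge]; fun_prop
  have hh : ContDiff ℝ ∞ h := by simp only [hh_def, dotp]; fun_prop
  have hbound : ∀ t ∈ Icc r s, ‖iteratedDeriv (5 + 1) g t‖ ≤ 2 * M₀ * M₆ := by
    intro t ht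
    rw [hg_def, iteratedDeriv_const_wedge hT, Real.norm_eq_abs]
    calc _ ≤ 2 * ‖T r‖ * ‖iteratedDeriv 6 T t‖ := abs_wedge_le _ _
      _ ≤ 2 * M₀ * M₆ := mul_le_mul (by linarith) (hM₆ t ht) (norm_nonneg _)
        (by linarith [(norm_nonneg _).trans hM₀])
  have key :=
    taylor_mean_remainder_bound_of_contDiff (hg.of_le (WithTop.coe_le_coe.2 le_top)) hrs hbound
  rw [sum_iteratedDeriv_eq_denominatorExpansion hk hg hh hg' hh' (wedge_self _) hr,
    Real.norm_eq_abs] at key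
  exact key.trans_eq (by ring)

theorem denominator_taylor_expansion_general
    (ℓ : ℝ) (hℓ : 0 < ℓ) (γ : ℝ → ℝ × ℝ) (k : ℝ → ℝ)
    (hγ : ContDiff ℝ (⊤ : ℕ∞) γ) (hper : ∀ s, γ (s + ℓ) = γ s)
    (hunit : ∀ s, dotp (deriv γ s) (deriv γ s) = 1)
    (hkdef : ∀ s, k s = dotp (iteratedDeriv 2 γ s) (Jmap (deriv γ s))) :
    ∃ δ > (0:ℝ), ∃ C > (0:ℝ), ∀ r s : ℝ, 0 < s - r → s - r < δ →
      |wedge (deriv γ r) (deriv γ s) -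
        (k r * (s - r) + deriv k r / 2 * (s - r) ^ 2 +
          (iteratedDeriv 2 k r - (k r) ^ 3) / 6 * (s - r) ^ 3 +
          (iteratedDeriv 3 k r - 6 * (k r) ^ 2 * deriv k r) / 24 * (s - r) ^ 4 +
          ((k r) ^ 5 - 10 * (k r) ^ 2 * iteratedDeriv 2 k r - 15 * k r * (deriv k r) ^ 2 +
            iteratedDeriv 4 k r) / 120 * (s - r) ^ 5)|
        ≤ C * (s - r) ^ 6 := by
  have hT : ContDiff ℝ ∞ (deriv γ) := (contDiff_infty_iff_deriv.mp hγ).2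
  have hk : ContDiff ℝ ∞ k := by
    have hT' : ContDiff ℝ ∞ (deriv (deriv γ)) := (contDiff_infty_iff_deriv.mp hT).2
    rw [funext hkdef, iteratedDeriv_succ, iteratedDeriv_one]
    simp only [dotp, Jmap]
    fun_prop
  have hTper : Function.Periodic (deriv γ) ℓ := by
    simpa using Function.Periodic.iteratedDeriv hper 1
  obtain ⟨M₀, hM₀, hT₀⟩ := hTper.exists_pos_norm_iteratedDeriv_le hℓ.ne' hT 0
  obtain ⟨M₆, hM₆, hT₆⟩ := hTper.exists_pos_norm_iteratedDeriv_le hℓ.ne' hT 6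
  refine ⟨1, one_pos, 2 * M₀ * M₆ / 5 !, by positivity, fun r s hrs _ => ?_⟩
  exact abs_wedge_sub_denominatorExpansion_le hT hk (hasDerivAt_deriv_of_unit_speed hγ hunit hkdef)
    (hunit r) (by linarith) (hT₀ r) fun t _ => hT₆ t

/-- Taylor expansion of the denominator `γ'(r) ∧ γ'(s)` of the outer length billiard
generating function, with `δ₀ = s - r` and curvature derivatives at `r`. -/
theorem denominator_taylor_expansion
    (ℓ : ℝ) (hℓ : 0 < ℓ) (γ : ℝ → ℝ × ℝ) (k : ℝ → ℝ)
    (hγ : ContDiff ℝ (⊤ : ℕ∞) γ) (hper : ∀ s, γ (s + ℓ) = γ s)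
    (hunit : ∀ s, dotp (deriv γ s) (deriv γ s) = 1)
    (hkdef : ∀ s, k s = dotp (iteratedDeriv 2 γ s) (Jmap (deriv γ s)))
    (hkpos : ∀ s, 0 < k s) :
    ∃ δ > (0:ℝ), ∃ C > (0:ℝ), ∀ r s : ℝ, 0 < s - r → s - r < δ →
      |wedge (deriv γ r) (deriv γ s) -
        (k r * (s - r) + deriv k r / 2 * (s - r) ^ 2 +
          (iteratedDeriv 2 k r - (k r) ^ 3) / 6 * (s - r) ^ 3 +
          (iteratedDeriv 3 k r - 6 * (k r) ^ 2 * deriv k r) / 24 * (s - r) ^ 4 +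
          ((k r) ^ 5 - 10 * (k r) ^ 2 * iteratedDeriv 2 k r - 15 * k r * (deriv k r) ^ 2 +
            iteratedDeriv 4 k r) / 120 * (s - r) ^ 5)|
        ≤ C * (s - r) ^ 6 :=
  denominator_taylor_expansion_general ℓ hℓ γ k hγ hper hunit hkdef
end
end

section
/- Let s₀ < s₁ with W := γ'(s₀) ∧ γ'(s₁) > 0, and suppose the tangent lines to the curve at γ(s₀) and γ(s₁) meet at the point P, i.e. P = γ(s₀) + t γ'(s₀) = γ(s₁) + u γ'(s₁) with t > 0 > u. Then |P − γ(s₀)| + |P − γ(s₁)| = ((γ(s₁) − γ(s₀)) ∧ (γ'(s₁) − γ'(s₀))) / W; that is, the generating function H(s₀,s₁) of the outer length billiard equals the sum of the two tangent-segment lengths from P. -/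
noncomputable section

/-! The tangent segments from `P` have lengths `t` and `-u`, and `γ(s₁) - γ(s₀) = t γ'(s₀) - u γ'(s₁)`.
Expanding the wedge bilinearly, the self-wedges vanish and the cross terms give
`(t γ'(s₀) - u γ'(s₁)) ∧ (γ'(s₁) - γ'(s₀)) = (t - u) (γ'(s₀) ∧ γ'(s₁))`. -/

theorem enorm2_eq_sqrt_dotp (v : ℝ × ℝ) : enorm2 v = Real.sqrt (dotp v v) := by
  simp only [enorm2, dotp, sq]

theorem enorm2_smul (c : ℝ) (v : ℝ × ℝ) : enorm2 (c • v) = |c| * enorm2 v := by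
  simp only [enorm2, Prod.smul_fst, Prod.smul_snd, smul_eq_mul]
  rw [show (c * v.1) ^ 2 + (c * v.2) ^ 2 = c ^ 2 * (v.1 ^ 2 + v.2 ^ 2) by ring,
    Real.sqrt_mul (sq_nonneg c), Real.sqrt_sq_eq_abs]

theorem enorm2_smul_of_dotp_self_eq_one {v : ℝ × ℝ} (hv : dotp v v = 1) (c : ℝ) :
    enorm2 (c • v) = |c| := by
  rw [enorm2_smul, enorm2_eq_sqrt_dotp, hv, Real.sqrt_one, mul_one]

theorem wedge_smul_sub_smul_sub (a b : ℝ × ℝ) (t u : ℝ) :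
    wedge (t • a - u • b) (b - a) = (t - u) * wedge a b := by
  simp only [wedge, Prod.fst_sub, Prod.snd_sub, Prod.smul_fst, Prod.smul_snd, smul_eq_mul]
  ring

theorem tangent_lengths_eq_wedge_div {p₀ p₁ v₀ v₁ P : ℝ × ℝ} {t u : ℝ}
    (hv₀ : dotp v₀ v₀ = 1) (hv₁ : dotp v₁ v₁ = 1) (hW : wedge v₀ v₁ ≠ 0)
    (ht : 0 ≤ t) (hu : u ≤ 0) (hPt : P = p₀ + t • v₀) (hPu : P = p₁ + u • v₁) :
    enorm2 (P - p₀) + enorm2 (P - p₁) = wedge (p₁ - p₀) (v₁ - v₀) / wedge v₀ v₁ := by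
  have hchord : p₁ - p₀ = t • v₀ - u • v₁ := by
    rw [sub_eq_sub_iff_add_eq_add, add_comm (t • v₀), ← hPt, hPu]
  have hP₀ : P - p₀ = t • v₀ := by rw [hPt, add_sub_cancel_left]
  have hP₁ : P - p₁ = u • v₁ := by rw [hPu, add_sub_cancel_left]
  rw [hP₀, hP₁, hchord, enorm2_smul_of_dotp_self_eq_one hv₀,
    enorm2_smul_of_dotp_self_eq_one hv₁, abs_of_nonneg ht, abs_of_nonpos hu,
    wedge_smul_sub_smul_sub, mul_div_cancel_right₀ _ hW, sub_eq_add_neg]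

theorem generating_function_equals_tangent_lengths_general
    (γ : ℝ → ℝ × ℝ)
    (hunit : ∀ s, dotp (deriv γ s) (deriv γ s) = 1)
    (s₀ s₁ : ℝ)
    (hW : 0 < wedge (deriv γ s₀) (deriv γ s₁))
    (P : ℝ × ℝ) (t u : ℝ) (ht : 0 < t) (hu : u < 0)
    (hPt : P = γ s₀ + t • deriv γ s₀) (hPu : P = γ s₁ + u • deriv γ s₁) :
    enorm2 (P - γ s₀) + enorm2 (P - γ s₁) =
      wedge (γ s₁ - γ s₀) (deriv γ s₁ - deriv γ s₀) / wedge (deriv γ s₀) (deriv γ s₁) :=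
  tangent_lengths_eq_wedge_div (hunit s₀) (hunit s₁) hW.ne' ht.le hu.le hPt hPu

/-- The generating function of the outer length billiard equals the sum of tangent-segment
lengths: if the tangent lines at `γ(s₀)` and `γ(s₁)` meet at `P = γ(s₀) + tγ'(s₀)
= γ(s₁) + uγ'(s₁)` with `t > 0 > u`, then
`|P-γ(s₀)| + |P-γ(s₁)| = ((γ(s₁)-γ(s₀)) ∧ (γ'(s₁)-γ'(s₀))) / (γ'(s₀) ∧ γ'(s₁))`. -/
theorem generating_function_equals_tangent_lengths
    (ℓ : ℝ) (hℓ : 0 < ℓ) (γ : ℝ → ℝ × ℝ)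
    (hγ : ContDiff ℝ (⊤ : ℕ∞) γ) (hper : ∀ s, γ (s + ℓ) = γ s)
    (hunit : ∀ s, dotp (deriv γ s) (deriv γ s) = 1)
    (s₀ s₁ : ℝ) (hlt : s₀ < s₁)
    (hW : 0 < wedge (deriv γ s₀) (deriv γ s₁))
    (P : ℝ × ℝ) (t u : ℝ) (ht : 0 < t) (hu : u < 0)
    (hPt : P = γ s₀ + t • deriv γ s₀) (hPu : P = γ s₁ + u • deriv γ s₁) :
    enorm2 (P - γ s₀) + enorm2 (P - γ s₁) =
      wedge (γ s₁ - γ s₀) (deriv γ s₁ - deriv γ s₀) / wedge (deriv γ s₀) (deriv γ s₁) :=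
  generating_function_equals_tangent_lengths_general γ hunit s₀ s₁ hW P t u ht hu hPt hPu
end
end

section
/- Let s₀ < s₁ with 1 + γ'(s₀) ⋅ γ'(s₁) > 0, set ℛ := ((γ(s₁) − γ(s₀)) ∧ γ'(s₁)) / (1 + γ'(s₀) ⋅ γ'(s₁)) and c := γ(s₀) − ℛ Jγ'(s₀). Then (c − γ(s₁)) ∧ γ'(s₁) = −ℛ; consequently, when ℛ > 0, the circle with center c and radius ℛ is tangent to the curve at γ(s₀) (its center lies on the outward normal at γ(s₀) at distance ℛ) and is tangent to the tangent line of the curve at γ(s₁), since its distance to that line equals ℛ. -/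
noncomputable section

/-- The circle of radius `ℛ = ((γ(s₁)-γ(s₀)) ∧ γ'(s₁)) / (1 + γ'(s₀)⋅γ'(s₁))` centered at
`c = γ(s₀) - ℛ Jγ'(s₀)` (on the outward normal at `γ(s₀)`) satisfies
`(c - γ(s₁)) ∧ γ'(s₁) = -ℛ`; hence (for `ℛ > 0`) it is tangent to the curve at `γ(s₀)` and
tangent to the tangent line of the curve at `γ(s₁)`. -/
theorem tangent_circle_radius_property
    (γ : ℝ → ℝ × ℝ) (hγ : ContDiff ℝ (⊤ : ℕ∞) γ)
    (hunit : ∀ s, dotp (deriv γ s) (deriv γ s) = 1)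
    (s₀ s₁ : ℝ) (hlt : s₀ < s₁)
    (hpos : 0 < 1 + dotp (deriv γ s₀) (deriv γ s₁))
    (R : ℝ) (hR : R = wedge (γ s₁ - γ s₀) (deriv γ s₁) / (1 + dotp (deriv γ s₀) (deriv γ s₁)))
    (c : ℝ × ℝ) (hc : c = γ s₀ - R • Jmap (deriv γ s₀)) :
    wedge (c - γ s₁) (deriv γ s₁) = -R := by
  have hne : 1 + dotp (deriv γ s₀) (deriv γ s₁) ≠ 0 := ne_of_gt hpos
  have hRW : R * (1 + dotp (deriv γ s₀) (deriv γ s₁))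
      = wedge (γ s₁ - γ s₀) (deriv γ s₁) := by
    rw [hR]; field_simp
  subst hc
  simp only [wedge, dotp, Jmap, Prod.fst_sub, Prod.snd_sub, Prod.smul_fst, Prod.smul_snd,
    smul_eq_mul] at *
  nlinarith [hRW]
end
end
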